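/- arXiv:2412.01068 — 9 statements merged into one kernel-verified Lean document; each statement's English description precedes it below -/
import Mathlib

section
/- Let d be a squarefree integer with d ≠ 0, 1 and let a, b be integers with b ≠ 0. Then Im((a + b√d)³) = 3a²b + b³d equals 0 if and only if d = −3 and a = ±b. -/
/-!
Dividing `3a²b + b³d = 0` by `b` gives `d · b² = -3 · a²`, an equality of two squarefree integers
times squares. Removing `gcd(a, b)`, coprimality forces `b² ∣ -3` and `a² ∣ d`, so both squares are
units by squarefreeness; hence `d = -3` and `a² = b²`.
-/

namespace Int

theorem sq_eq_one_of_mul_sq_eq_mul_sq {m n a b : ℤ} (hn : Squarefree n) (hab : IsCoprime a b)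
    (h : m * b ^ 2 = n * a ^ 2) : b ^ 2 = 1 := by
  have hdvd : b ^ 2 ∣ n * a ^ 2 := ⟨m, by rw [← h, mul_comm]⟩
  have hb : b * b ∣ n := by
    rw [← sq]
    exact (hab.symm.pow (m := 2) (n := 2)).dvd_of_dvd_mul_right hdvd
  exact isUnit_sq (hn b hb)

theorem eq_and_sq_eq_sq_of_mul_sq_eq_mul_sq {m n a b : ℤ} (hm : Squarefree m)
    (hn : Squarefree n) (hb : b ≠ 0) (h : m * b ^ 2 = n * a ^ 2) : m = n ∧ a ^ 2 = b ^ 2 := by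
  obtain ⟨g, a', b', -, hcop, rfl, rfl⟩ := exists_gcd_one' (gcd_pos_of_ne_zero_right a hb)
  have hg : (g : ℤ) ≠ 0 := by rintro hg; simp [hg] at hb
  have h' : m * b' ^ 2 = n * a' ^ 2 := by
    apply mul_right_cancel₀ (pow_ne_zero 2 hg)
    linear_combination h
  have hcop : IsCoprime a' b' := isCoprime_iff_gcd_eq_one.mpr hcop
  have hb' := sq_eq_one_of_mul_sq_eq_mul_sq hn hcop h'
  have ha' := sq_eq_one_of_mul_sq_eq_mul_sq hm hcop.symm h'.symm
  constructor
  · simpa [ha', hb'] using h'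
  · rw [mul_pow, mul_pow, ha', hb']

end Int

theorem stmt_4_general (d : ℤ) (hd : Squarefree d)
    (a b : ℤ) (hb : b ≠ 0) :
    3 * a ^ 2 * b + b ^ 3 * d = 0 ↔ d = -3 ∧ (a = b ∨ a = -b) := by
  have h3 : Squarefree (-3 : ℤ) := Int.prime_three.neg.squarefree
  rw [← sq_eq_sq_iff_eq_or_eq_neg]
  constructor
  · intro h
    apply Int.eq_and_sq_eq_sq_of_mul_sq_eq_mul_sq hd h3 hb
    apply mul_left_cancel₀ hb
    linear_combination h
  · rintro ⟨rfl, hab⟩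
    linear_combination 3 * b * hab

/-- Let `d` be a squarefree integer with `d ≠ 0, 1` and let `a, b` be integers with `b ≠ 0`.
Then `Im((a + b√d)³) = 3a²b + b³d` equals `0` if and only if `d = −3` and `a = ±b`. -/
theorem stmt_4 (d : ℤ) (hd : Squarefree d) (hd0 : d ≠ 0) (hd1 : d ≠ 1)
    (a b : ℤ) (hb : b ≠ 0) :
    3 * a ^ 2 * b + b ^ 3 * d = 0 ↔ d = -3 ∧ (a = b ∨ a = -b) :=
  stmt_4_general d hd a b hb
end

section
/- Let d be a squarefree integer with d ≠ 0, 1, let p > 3 be a prime, and let a, b be integers. Then Im((a + b√d)^p) = 0 if and only if b = 0. Equivalently, writing p = 2m + 1, the sum Σ_{k=0}^{m} C(p, 2k+1) a^{p−(2k+1)} b^{2k+1} d^k vanishes if and only if b = 0. -/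
/-!
With `ω² = d`, the sum `S` is the `ω`-coordinate of `(a + bω)^p`: precisely
`(a + bω)^p - (a - bω)^p = 2 S ω`. So if `S = 0`, the `p`-th powers of the conjugates
`a ± bω` agree in the quadratic field `ℚ(√d)`. Were `a + bω ≠ a - bω`, their ratio would be a
primitive `p`-th root of unity, of degree `p - 1 > 2` over `ℚ`, which cannot lie in a field of
degree `2`. Hence `2bω = 0`, i.e. `b = 0`.
-/

open Finset Polynomial

theorem Finset.sum_range_two_mul {M : Type*} [AddCommMonoid M] (f : ℕ → M) (n : ℕ) :
    ∑ j ∈ range (2 * n), f j = ∑ k ∈ range n, (f (2 * k) + f (2 * k + 1)) := by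
  induction n with
  | zero => simp
  | succ n ih => rw [Nat.mul_succ, sum_range_succ, sum_range_succ, sum_range_succ, ih, add_assoc]

theorem add_pow_sub_sub_pow_two_mul_add_one {R : Type*} [CommRing R] (x y : R) (m : ℕ) :
    (x + y) ^ (2 * m + 1) - (x - y) ^ (2 * m + 1) =
      2 * ∑ k ∈ range (m + 1),
        ((2 * m + 1).choose (2 * k + 1) : R) * x ^ (2 * m + 1 - (2 * k + 1)) * y ^ (2 * k + 1) := by
  rw [add_comm x, sub_eq_neg_add x, add_pow, add_pow, ← sum_sub_distrib,
    show 2 * m + 1 + 1 = 2 * (m + 1) by ring, sum_range_two_mul, mul_sum]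
  refine sum_congr rfl fun k _ => ?_
  rw [Even.neg_pow ⟨k, two_mul k⟩, Odd.neg_pow ⟨k, rfl⟩]
  ring

theorem add_mul_pow_sub_sub_mul_pow_two_mul_add_one {R : Type*} [CommRing R] {ω d : R}
    (hω : ω * ω = d) (x y : R) (m : ℕ) :
    (x + y * ω) ^ (2 * m + 1) - (x - y * ω) ^ (2 * m + 1) =
      2 * (∑ k ∈ range (m + 1), ((2 * m + 1).choose (2 * k + 1) : R) *
        x ^ (2 * m + 1 - (2 * k + 1)) * y ^ (2 * k + 1) * d ^ k) * ω := by
  rw [add_pow_sub_sub_pow_two_mul_add_one, mul_assoc, sum_mul]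
  congr 1
  refine sum_congr rfl fun k _ => ?_
  rw [mul_pow, pow_succ ω, pow_mul, sq, hω]
  ring

theorem Int.not_isSquare_of_squarefree {d : ℤ} (hd : Squarefree d) (hd1 : d ≠ 1) :
    ¬ IsSquare d := by
  rintro ⟨r, rfl⟩
  rcases Int.isUnit_iff.mp (hd r dvd_rfl) with rfl | rfl <;> simp at hd1

theorem eq_of_pow_eq_pow_of_finrank_lt {L : Type*} [Field L] [CharZero L] [FiniteDimensional ℚ L]
    {p : ℕ} (hp : p.Prime) (hL : Module.finrank ℚ L < p - 1) {u v : L} (huv : u ^ p = v ^ p) :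
    u = v := by
  have : Fact p.Prime := ⟨hp⟩
  rcases eq_or_ne v 0 with rfl | hv
  · exact pow_eq_zero_iff hp.ne_zero |>.mp (huv.trans (zero_pow hp.ne_zero))
  by_contra hne
  have hζ : IsPrimitiveRoot (u / v) p := IsPrimitiveRoot.iff_orderOf.mpr <|
    orderOf_eq_prime (by rw [div_pow, huv, div_self (pow_ne_zero p hv)])
      (by rwa [Ne, div_eq_one_iff_eq hv])
  have hdeg := minpoly.natDegree_le (A := ℚ) (u / v)
  rw [← cyclotomic_eq_minpoly_rat hζ hp.pos, natDegree_cyclotomic, Nat.totient_prime hp] at hdeg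
  omega

theorem QuadraticAlgebra.fact_of_not_isSquare {d : ℤ} (hd : ¬ IsSquare d) :
    Fact (∀ r : ℚ, r ^ 2 ≠ d + 0 * r) :=
  ⟨fun r hr => hd <| Rat.isSquare_intCast_iff.mp ⟨r, by rw [← sq, hr, zero_mul, add_zero]⟩⟩

theorem stmt_6_general (d : ℤ) (hd : Squarefree d) (hd1 : d ≠ 1)
    (p : ℕ) (hp : p.Prime) (hp3 : 3 < p) (a b : ℤ) :
    (∑ k ∈ Finset.range ((p - 1) / 2 + 1),
        (p.choose (2 * k + 1) : ℤ) * a ^ (p - (2 * k + 1)) * b ^ (2 * k + 1) * d ^ k) = 0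
      ↔ b = 0 := by
  refine ⟨fun hS => ?_, fun hb => by simp [hb]⟩
  obtain ⟨m, rfl⟩ := hp.odd_of_ne_two (by omega)
  rw [show (2 * m + 1 - 1) / 2 = m by omega] at hS
  have := QuadraticAlgebra.fact_of_not_isSquare (Int.not_isSquare_of_squarefree hd hd1)
  let ω : QuadraticAlgebra ℚ (d : ℚ) 0 := QuadraticAlgebra.omega
  have hω : ω * ω = d := by simp [ω, QuadraticAlgebra.omega_mul_omega_eq_add]
  have hω0 : ω ≠ 0 := fun h => by simpa [ω] using congrArg QuadraticAlgebra.im h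
  have hpow : ((a : _) + b * ω) ^ (2 * m + 1) = (a - b * ω) ^ (2 * m + 1) := by
    have hSK := congrArg (Int.cast : ℤ → QuadraticAlgebra ℚ (d : ℚ) 0) hS
    simp only [Int.cast_sum, Int.cast_mul, Int.cast_pow, Int.cast_natCast, Int.cast_zero] at hSK
    rw [← sub_eq_zero, add_mul_pow_sub_sub_mul_pow_two_mul_add_one hω, hSK, mul_zero, zero_mul]
  have hfin : Module.finrank ℚ (QuadraticAlgebra ℚ (d : ℚ) 0) < 2 * m + 1 - 1 := by
    rw [QuadraticAlgebra.finrank_eq_two]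
    omega
  have hb := eq_of_pow_eq_pow_of_finrank_lt hp hfin hpow
  have : (b : QuadraticAlgebra ℚ (d : ℚ) 0) * ω = 0 := by linear_combination hb / 2
  exact_mod_cast (mul_eq_zero.mp this).resolve_right hω0

/-- Let `d` be a squarefree integer with `d ≠ 0, 1`, let `p > 3` be a prime, and let `a, b`
be integers.  Writing `p = 2m + 1`, the imaginary part of `(a + b√d)^p`, namely the sum
`Σ_{k=0}^{m} C(p, 2k+1) a^(p−(2k+1)) b^(2k+1) d^k`, vanishes if and only if `b = 0`. -/
theorem stmt_6 (d : ℤ) (hd : Squarefree d) (hd0 : d ≠ 0) (hd1 : d ≠ 1)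
    (p : ℕ) (hp : p.Prime) (hp3 : 3 < p) (a b : ℤ) :
    (∑ k ∈ Finset.range ((p - 1) / 2 + 1),
        (p.choose (2 * k + 1) : ℤ) * a ^ (p - (2 * k + 1)) * b ^ (2 * k + 1) * d ^ k) = 0
      ↔ b = 0 :=
  stmt_6_general d hd hd1 p hp hp3 a b
end

section
/- Let d be a squarefree integer with d ≠ 0, 1, let p > 3 be a prime, and let a, b be integers. Then Re((a + b√d)^p) = 0 if and only if a = 0. Equivalently, writing p = 2m + 1, the sum Σ_{k=0}^{m} C(p, 2k) a^{p−2k} b^{2k} d^k vanishes if and only if a = 0. -/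
lemma aux_nonsq (d : ℤ) (hd : Squarefree d) (hd1 : d ≠ 1) (a b : ℤ)
    (h : a ^ 2 = d * b ^ 2) : a = 0 := by
  by_contra ha
  have hb : b ≠ 0 := by
    rintro rfl
    simp at h
    exact ha h
  have hg : 0 < Int.gcd a b := Int.gcd_pos_of_ne_zero_left b ha
  obtain ⟨a', b', hcop, ha', hb'⟩ := Int.exists_gcd_one hg
  set g : ℤ := (Int.gcd a b : ℤ) with hgdef
  have hgd : g ≠ 0 := by positivity
  have hcop' : IsCoprime a' b' := Int.isCoprime_iff_gcd_eq_one.2 hcop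
  have h2 : a' ^ 2 = d * b' ^ 2 := by
    rw [ha', hb'] at h
    have h3 : a' ^ 2 * g ^ 2 = d * b' ^ 2 * g ^ 2 := by ring_nf; ring_nf at h; linarith
    exact mul_right_cancel₀ (pow_ne_zero 2 hgd) h3
  have hdvd : b' ^ 2 ∣ a' ^ 2 := ⟨d, by linarith [h2]⟩
  have hu : IsUnit (b' ^ 2) := ((hcop'.pow (n := 2) (m := 2)).symm).isUnit_of_dvd hdvd
  have hb1 : b' ^ 2 = 1 := by
    rcases Int.isUnit_iff.1 hu with h1 | h1
    · exact h1
    · nlinarith [sq_nonneg b']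
  have hda : d = a' * a' := by rw [hb1] at h2; nlinarith [h2]
  have := hd a' ⟨1, by linarith⟩
  rcases Int.isUnit_iff.1 this with h1 | h1 <;> rw [h1] at hda <;> simp at hda <;> omega

lemma aux_sum_two_mul {M : Type*} [AddCommMonoid M] (n : ℕ) (f : ℕ → M) :
    ∑ j ∈ Finset.range (2 * n), f j
      = ∑ i ∈ Finset.range n, (f (2 * i) + f (2 * i + 1)) := by
  induction n with
  | zero => simp
  | succ n ih =>
      rw [Finset.sum_range_succ, ← ih, Nat.mul_succ, show 2*n+2 = (2*n+1)+1 by ring,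
        Finset.sum_range_succ, Finset.sum_range_succ, add_assoc]

lemma aux_key (p m : ℕ) (hpm : p = 2 * m + 1) (a b d : ℤ) (ω : ℂ) (hω : ω ^ 2 = (d : ℂ)) :
    ((a : ℂ) + b * ω) ^ p + ((a : ℂ) - b * ω) ^ p
      = 2 * ∑ k ∈ Finset.range (m + 1),
          (p.choose (2 * k) : ℂ) * (a : ℂ) ^ (p - 2 * k) * (b : ℂ) ^ (2 * k) * (d : ℂ) ^ k := by
  have h1 : ((a : ℂ) + b * ω) ^ p
      = ∑ k ∈ Finset.range (p + 1), ((b:ℂ)*ω)^k * (a:ℂ)^(p-k) * (p.choose k : ℂ) := by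
    rw [show (a:ℂ) + b*ω = (b*ω) + a by ring, add_pow]
  have h2 : ((a : ℂ) - b * ω) ^ p
      = ∑ k ∈ Finset.range (p + 1), (-((b:ℂ)*ω))^k * (a:ℂ)^(p-k) * (p.choose k : ℂ) := by
    rw [show (a:ℂ) - b*ω = (-(b*ω)) + a by ring, add_pow]
  rw [h1, h2, ← Finset.sum_add_distrib, show p+1 = 2*(m+1) by omega, aux_sum_two_mul,
    Finset.mul_sum]
  apply Finset.sum_congr rfl
  intro i _
  rw [Even.neg_pow ⟨i, by ring⟩, Odd.neg_pow ⟨i, by ring⟩, mul_pow, pow_mul, pow_mul, hω]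
  ring

/-- Let `d` be a squarefree integer with `d ≠ 0, 1`, let `p > 3` be a prime, and let `a, b`
be integers.  Writing `p = 2m + 1`, the real part of `(a + b√d)^p`, namely the sum
`Σ_{k=0}^{m} C(p, 2k) a^(p−2k) b^(2k) d^k`, vanishes if and only if `a = 0`. -/
theorem stmt_7 (d : ℤ) (hd : Squarefree d) (hd0 : d ≠ 0) (hd1 : d ≠ 1)
    (p : ℕ) (hp : p.Prime) (hp3 : 3 < p) (a b : ℤ) :
    (∑ k ∈ Finset.range ((p - 1) / 2 + 1),
        (p.choose (2 * k) : ℤ) * a ^ (p - 2 * k) * b ^ (2 * k) * d ^ k) = 0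
      ↔ a = 0 := by
  have hodd : p % 2 = 1 := Nat.odd_iff.1 (hp.odd_of_ne_two (by omega))
  set m := (p - 1) / 2 with hm
  have hpm : p = 2 * m + 1 := by omega
  constructor
  · -- forward
    intro hS
    by_contra ha
    have hb : b ≠ 0 := by
      rintro rfl
      rw [Finset.sum_eq_single_of_mem 0 (Finset.mem_range.2 (by omega))
        (fun k _ hk => by
          have h2k : 2 * k ≠ 0 := by omega
          simp [zero_pow h2k])] at hS
      simp at hS
      exact ha hS.1
    have hN : a ^ 2 - d * b ^ 2 ≠ 0 := fun h => ha (aux_nonsq d hd hd1 a b (by linarith))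
    obtain ⟨ω, hω⟩ := IsAlgClosed.exists_pow_nat_eq (k := ℂ) ((d : ℤ) : ℂ) two_pos
    set z : ℂ := (a : ℂ) + b * ω with hz
    set w : ℂ := (a : ℂ) - b * ω with hwdef
    have hzw : z * w = ((a ^ 2 - d * b ^ 2 : ℤ) : ℂ) := by
      push_cast
      rw [hz, hwdef]
      linear_combination (-(b:ℂ)^2) * hω
    have hzw0 : z * w ≠ 0 := by rw [hzw]; exact_mod_cast hN
    have hw : w ≠ 0 := fun h => hzw0 (by rw [h, mul_zero])
    have hsum0 : ∑ k ∈ Finset.range (m + 1),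
        (p.choose (2 * k) : ℂ) * (a : ℂ) ^ (p - 2 * k) * (b : ℂ) ^ (2 * k) * (d : ℂ) ^ k
          = 0 := by exact_mod_cast hS
    have hkey := aux_key p m hpm a b d ω hω
    rw [hsum0, mul_zero] at hkey
    have hzp : z ^ p = -w ^ p := eq_neg_of_add_eq_zero_left hkey
    set u : ℂ := z / w with hu
    have hup : u ^ p = -1 := by
      rw [hu, div_pow, hzp, neg_div, div_self (pow_ne_zero p hw)]
    have hu2p : u ^ (2 * p) = 1 := by
      rw [mul_comm, pow_mul, hup]; norm_num
    obtain ⟨e, he, heroot⟩ := (isRoot_of_unity_iff (by omega : 0 < 2 * p) ℂ).1 hu2p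
    have hedvd : e ∣ 2 * p := (Nat.mem_divisors.1 he).1
    have hue : u ^ e = 1 := by
      have h0 := heroot.dvd (Polynomial.cyclotomic.dvd_X_pow_sub_one e ℂ)
      simpa [Polynomial.IsRoot, sub_eq_zero] using h0
    have hnep : ¬ e ∣ p := by
      rintro ⟨c, rfl⟩
      rw [pow_mul, hue, one_pow] at hup
      norm_num at hup
    have heven : 2 ∣ e := by
      rcases Nat.even_or_odd e with he2 | he2
      · exact he2.two_dvd
      · exact absurd ((Nat.coprime_two_right.2 he2).dvd_mul_left.1 hedvd) hnep
    obtain ⟨f, rfl⟩ := heven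
    have hf : f ∣ p := (Nat.mul_dvd_mul_iff_left (by norm_num : 0 < 2)).1 hedvd
    rcases hp.eq_one_or_self_of_dvd f hf with rfl | hfp
    · -- e = 2, so u = ±1
      have hu2 : u ^ 2 = 1 := by simpa using hue
      have : (u - 1) * (u + 1) = 0 := by linear_combination hu2
      rcases mul_eq_zero.1 this with h1 | h1
      · have hu1 : u = 1 := by linear_combination h1
        rw [hu1, one_pow] at hup
        norm_num at hup
      · have hu1 : u = -1 := by linear_combination h1
        rw [hu, div_eq_iff hw] at hu1
        have haz : (a : ℂ) = 0 := by
          rw [hz, hwdef] at hu1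
          linear_combination hu1 / 2
        exact ha (by exact_mod_cast haz)
    · -- e = 2p : degree argument via cyclotomic polynomial
      subst hfp
      set s : ℚ := ((2 * a ^ 2 + 2 * d * b ^ 2 : ℤ) : ℚ) / ((a ^ 2 - d * b ^ 2 : ℤ) : ℚ)
        with hs
      have hNQ : ((a ^ 2 - d * b ^ 2 : ℤ) : ℚ) ≠ 0 := Int.cast_ne_zero.2 hN
      have hNC : ((a : ℂ) ^ 2 - (d : ℂ) * (b : ℂ) ^ 2) ≠ 0 := by exact_mod_cast hN
      have hsC : (s : ℂ) * (z * w) = ((2 * a ^ 2 + 2 * d * b ^ 2 : ℤ) : ℂ) := by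
        rw [hzw, hs]
        push_cast
        rw [div_mul_eq_mul_div, mul_div_assoc, div_self hNC, mul_one]
      have hz2w2 : z ^ 2 + w ^ 2 = ((2 * a ^ 2 + 2 * d * b ^ 2 : ℤ) : ℂ) := by
        push_cast
        rw [hz, hwdef]
        linear_combination (2 * (b:ℂ) ^ 2) * hω
      have hexp : (u ^ 2 - (s : ℂ) * u + 1) * w ^ 2 = z ^ 2 + w ^ 2 - (s : ℂ) * (z * w) := by
        rw [hu]
        field_simp
        ring
      have hquad : u ^ 2 - (s : ℂ) * u + 1 = 0 := by
        have h9 : (u ^ 2 - (s : ℂ) * u + 1) * w ^ 2 = 0 := by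
          rw [hexp, hz2w2, hsC]; ring
        rcases mul_eq_zero.1 h9 with h | h
        · exact h
        · exact absurd h (pow_ne_zero 2 hw)
      have hq : (Polynomial.aeval u)
          (Polynomial.X ^ 2 - Polynomial.C s * Polynomial.X + 1 : Polynomial ℚ) = 0 := by
        simp only [map_add, map_sub, map_pow, map_one, map_mul, Polynomial.aeval_X,
          Polynomial.aeval_C]
        simpa using hquad
      have hcyc : (Polynomial.aeval u) (Polynomial.cyclotomic (2 * f) ℚ) = 0 := by
        rw [Polynomial.aeval_def, ← Polynomial.eval_map, Polynomial.map_cyclotomic]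
        exact heroot
      have hmin : minpoly ℚ u = Polynomial.cyclotomic (2 * f) ℚ :=
        Eq.symm <| minpoly.eq_of_irreducible_of_monic
          (Polynomial.cyclotomic.irreducible_rat (by omega : 0 < 2 * f)) hcyc
          (Polynomial.cyclotomic.monic _ _)
      have hdeg2 : (Polynomial.X ^ 2 - Polynomial.C s * Polynomial.X + 1 :
          Polynomial ℚ).natDegree = 2 := by compute_degree!
      have hne0 : (Polynomial.X ^ 2 - Polynomial.C s * Polynomial.X + 1 :
          Polynomial ℚ) ≠ 0 := fun h => by simp [h] at hdeg2
      have hle := Polynomial.natDegree_le_of_dvd (minpoly.dvd ℚ u hq) hne0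
      rw [hmin, Polynomial.natDegree_cyclotomic, hdeg2] at hle
      have htot : Nat.totient (2 * f) = f - 1 := by
        rw [Nat.totient_mul ((Nat.coprime_primes Nat.prime_two hp).2 (by omega)),
          Nat.totient_two, Nat.totient_prime hp, one_mul]
      omega
  · rintro rfl
    apply Finset.sum_eq_zero
    intro k hk
    have hpk : p - 2 * k ≠ 0 := by
      have := Finset.mem_range.1 hk
      omega
    simp [zero_pow hpk]
end

section
/- Let d be a squarefree integer with d ≠ 0, 1, let p > 3 be a prime, and let x = a + b√d be an element of K = ℚ(√d) with a, b ∈ ℚ. Then Re(x^p) = 0 if and only if a = 0 (equivalently, x^p ∈ ℚ·√d if and only if x ∈ ℚ·√d). -/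
/-!
Write `x = a + b√d` and `y = a - b√d`. If `x ^ p = n√d` then also `y ^ p = -n√d`, so when
`a ≠ 0` the element `-x / y ≠ 1` of `ℚ(√d)` is a `p`-th root of unity, hence a primitive
one. Its minimal polynomial over `ℚ` is then the `p`-th cyclotomic polynomial, of degree
`p - 1 > 2`, which is impossible inside a quadratic extension of `ℚ`.
-/

open Polynomial IntermediateField

theorem Squarefree.not_isSquare_intCast_rat {d : ℤ} (hd : Squarefree d) (hd1 : d ≠ 1) :
    ¬IsSquare (d : ℚ) := by
  rintro h
  obtain ⟨r, rfl⟩ := Rat.isSquare_intCast_iff.mp h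
  rcases Int.isUnit_iff.mp (hd r dvd_rfl) with rfl | rfl <;> simp at hd1

section QuadraticExtension

variable {K : Type*} [Field K] [CharZero K] {s : K} {c : ℚ}

theorem ratCast_add_mul_eq_zero_iff (hs : s ^ 2 = c) (hc : ¬IsSquare c) {A B : ℚ} :
    (A : K) + B * s = 0 ↔ A = 0 ∧ B = 0 := by
  refine ⟨fun h => ?_, by rintro ⟨rfl, rfl⟩; simp⟩
  by_cases hB : B = 0
  · subst hB
    simpa using h
  · have hsq : s = ((-A / B : ℚ) : K) := by
      have : (B : K) ≠ 0 := by exact_mod_cast hB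
      push_cast
      field_simp
      linear_combination h
    exact absurd ⟨-A / B, by rw [← sq]; exact_mod_cast (hsq ▸ hs).symm⟩ hc

theorem exists_add_mul_pow_and_sub_mul_pow (hs : s ^ 2 = c) (a b : ℚ) (n : ℕ) :
    ∃ A B : ℚ, ((a : K) + b * s) ^ n = A + B * s ∧ ((a : K) - b * s) ^ n = A - B * s := by
  induction n with
  | zero => exact ⟨1, 0, by simp, by simp⟩
  | succ n ih =>
    obtain ⟨A, B, h₁, h₂⟩ := ih
    refine ⟨A * a + B * b * c, A * b + B * a, ?_, ?_⟩
    · rw [pow_succ, h₁]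
      push_cast
      linear_combination ((B : K) * b) * hs
    · rw [pow_succ, h₂]
      push_cast
      linear_combination ((B : K) * b) * hs

theorem sub_mul_pow_eq_neg_of_add_mul_pow_eq (hs : s ^ 2 = c) (hc : ¬IsSquare c)
    {a b n : ℚ} {m : ℕ} (h : ((a : K) + b * s) ^ m = n * s) :
    ((a : K) - b * s) ^ m = -(n * s) := by
  obtain ⟨A, B, h₁, h₂⟩ := exists_add_mul_pow_and_sub_mul_pow hs a b m
  have hAB : A = 0 ∧ B - n = 0 :=
    (ratCast_add_mul_eq_zero_iff hs hc).mp (by push_cast; linear_combination h₁.symm.trans h)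
  rw [h₂, hAB.1, sub_eq_zero.mp hAB.2]
  simp

theorem natDegree_minpoly_le_two (hs : s ^ 2 = c) {u : K} (hu : u ∈ ℚ⟮s⟯) :
    (minpoly ℚ u).natDegree ≤ 2 := by
  have hroot : aeval s (X ^ 2 - C c) = 0 := by simp [hs]
  have hmonic : (X ^ 2 - C c).Monic := monic_X_pow_sub_C c two_ne_zero
  have hint : IsIntegral ℚ s := ⟨_, hmonic, hroot⟩
  have : FiniteDimensional ℚ ℚ⟮s⟯ := adjoin.finiteDimensional hint
  calc (minpoly ℚ u).natDegree = (minpoly ℚ (⟨u, hu⟩ : ℚ⟮s⟯)).natDegree :=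
        congr_arg natDegree (IntermediateField.minpoly_eq ⟨u, hu⟩).symm
    _ ≤ Module.finrank ℚ ℚ⟮s⟯ := minpoly.natDegree_le _
    _ = (minpoly ℚ s).natDegree := adjoin.finrank hint
    _ ≤ (X ^ 2 - C c).natDegree := natDegree_le_of_dvd (minpoly.dvd ℚ s hroot) hmonic.ne_zero
    _ = 2 := natDegree_X_pow_sub_C

theorem totient_le_two_of_isPrimitiveRoot_mem_adjoin (hs : s ^ 2 = c) {ζ : K} {n : ℕ}
    (hζ : IsPrimitiveRoot ζ n) (hn : 0 < n) (hmem : ζ ∈ ℚ⟮s⟯) : n.totient ≤ 2 := by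
  rw [← natDegree_cyclotomic n ℚ, cyclotomic_eq_minpoly_rat hζ hn]
  exact natDegree_minpoly_le_two hs hmem

theorem ratCast_add_mul_mem_adjoin (a b : ℚ) : (a : K) + b * s ∈ ℚ⟮s⟯ :=
  add_mem (IntermediateField.algebraMap_mem _ a)
    (mul_mem (IntermediateField.algebraMap_mem _ b) (mem_adjoin_simple_self ℚ s))

theorem eq_zero_of_add_mul_pow_eq_mul (hs : s ^ 2 = c) (hc : ¬IsSquare c) {p : ℕ}
    (hp : p.Prime) (hp3 : 3 < p) {a b n : ℚ} (h : ((a : K) + b * s) ^ p = n * s) : a = 0 := by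
  have hind (A B : ℚ) (h : (A : K) + B * s = 0) : A = 0 :=
    ((ratCast_add_mul_eq_zero_iff hs hc).mp h).1
  by_contra ha
  set x : K := a + b * s
  set y : K := a + (-b : ℚ) * s
  have hy : y ^ p = -(n * s) := by
    simpa [y, ← sub_eq_add_neg] using sub_mul_pow_eq_neg_of_add_mul_pow_eq hs hc h
  have hx0 : x ≠ 0 := fun hx => ha (hind _ _ hx)
  have hy0 : y ≠ 0 := fun hy => ha (hind _ _ hy)
  have hns : (n : K) * s ≠ 0 := h ▸ pow_ne_zero p hx0
  have hup : (-(x / y)) ^ p = 1 := by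
    rw [(hp.odd_of_ne_two (by omega)).neg_pow, div_pow, h, hy, div_neg, neg_neg, div_self hns]
  have hu1 : -(x / y) ≠ 1 := by
    intro hu
    rw [neg_eq_iff_eq_neg, div_eq_iff hy0] at hu
    have : ((2 * a : ℚ) : K) + (0 : ℚ) * s = 0 := by
      simp only [x, y] at hu
      push_cast at hu ⊢
      linear_combination hu
    exact ha (by linarith [hind _ _ this])
  have : Fact p.Prime := ⟨hp⟩
  have hprim : IsPrimitiveRoot (-(x / y)) p :=
    IsPrimitiveRoot.iff_orderOf.mpr (orderOf_eq_prime hup hu1)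
  have hmem : -(x / y) ∈ ℚ⟮s⟯ :=
    neg_mem (div_mem (ratCast_add_mul_mem_adjoin a b) (ratCast_add_mul_mem_adjoin a (-b)))
  have htot := totient_le_two_of_isPrimitiveRoot_mem_adjoin hs hprim hp.pos hmem
  rw [Nat.totient_prime hp] at htot
  omega

end QuadraticExtension

theorem stmt_9_general (d : ℤ) (hd : Squarefree d) (hd1 : d ≠ 1)
    (K : Type*) [Field K] [CharZero K] (s : K) (hs : s ^ 2 = (d : K))
    (p : ℕ) (hp : p.Prime) (hp3 : 3 < p) (a b : ℚ) :
    (∃ n : ℚ, ((a : K) + (b : K) * s) ^ p = (n : K) * s) ↔ a = 0 := by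
  have hs' : s ^ 2 = ((d : ℚ) : K) := by rw [hs, Rat.cast_intCast]
  constructor
  · rintro ⟨n, hn⟩
    exact eq_zero_of_add_mul_pow_eq_mul hs' (hd.not_isSquare_intCast_rat hd1) hp hp3 hn
  · rintro rfl
    obtain ⟨k, rfl⟩ := hp.odd_of_ne_two (by omega)
    refine ⟨b ^ (2 * k + 1) * d ^ k, ?_⟩
    push_cast
    rw [zero_add, mul_pow, pow_succ s, pow_mul, hs]
    ring

/-- Let `d` be a squarefree integer with `d ≠ 0, 1`, let `p > 3` be a prime, and let
`x = a + b√d` be an element of `K = ℚ(√d)` with `a, b ∈ ℚ`.  Then `Re(x^p) = 0`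
(equivalently, `x^p ∈ ℚ·√d`) if and only if `a = 0`.  Here `K` is any field of
characteristic zero containing a square root `s` of `d`. -/
theorem stmt_9 (d : ℤ) (hd : Squarefree d) (hd0 : d ≠ 0) (hd1 : d ≠ 1)
    (K : Type*) [Field K] [CharZero K] (s : K) (hs : s ^ 2 = (d : K))
    (p : ℕ) (hp : p.Prime) (hp3 : 3 < p) (a b : ℚ) :
    (∃ n : ℚ, ((a : K) + (b : K) * s) ^ p = (n : K) * s) ↔ a = 0 :=
  stmt_9_general d hd hd1 K s hs p hp hp3 a b
end

section
/- Let d be a squarefree integer with d ≠ 0, 1, let K = ℚ(√d), let p > 3 be a prime and α ∈ ℚ. If (X, Y) ∈ K × K satisfies Y² = X^p + α, then X ∈ ℚ if and only if Im(Y) = 0 or Re(Y) = 0. -/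
lemma aux_no_sqrt (d : ℤ) (hd : Squarefree d) (hd1 : d ≠ 1) (r : ℚ) :
    r ^ 2 ≠ (d : ℚ) := by
  intro h
  have hnum : r.num ^ 2 = d := by
    have := congrArg Rat.num h
    simpa [Rat.num_pow] using this
  have : IsUnit r.num := hd r.num (by rw [← sq]; exact hnum ▸ dvd_refl _)
  rcases Int.isUnit_iff.mp this with h1 | h1 <;>
    · rw [h1] at hnum; omega

lemma aux_indep (d : ℤ) (hd : Squarefree d) (hd1 : d ≠ 1)
    (K : Type*) [Field K] [CharZero K] (s : K) (hs : s ^ 2 = (d : K))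
    (a b : ℚ) (h : (a : K) + (b : K) * s = 0) : a = 0 ∧ b = 0 := by
  by_cases hb : b = 0
  · refine ⟨?_, hb⟩
    rw [hb] at h
    push_cast at h
    exact_mod_cast by simpa using h
  · exfalso
    have hbK : (b : K) ≠ 0 := by exact_mod_cast hb
    have hsval : s = ((-a / b : ℚ) : K) := by
      push_cast
      field_simp
      linear_combination h
    have h2 : (((-a / b : ℚ)) : K) ^ 2 = ((d : ℤ) : K) := by rw [← hsval]; exact hs
    have h3 : ((-a / b : ℚ)) ^ 2 = (d : ℚ) := by exact_mod_cast h2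
    exact aux_no_sqrt d hd hd1 _ h3

lemma aux_conj_pow (d : ℤ) (K : Type*) [Field K] [CharZero K] (s : K) (hs : s ^ 2 = (d : K))
    (a b : ℚ) : ∀ k : ℕ, ∃ A B : ℚ,
      ((a : K) + (b : K) * s) ^ k = (A : K) + (B : K) * s ∧
      ((a : K) - (b : K) * s) ^ k = (A : K) - (B : K) * s := by
  intro k
  induction k with
  | zero => exact ⟨1, 0, by simp, by simp⟩
  | succ k ih =>
      obtain ⟨A, B, h1, h2⟩ := ih
      refine ⟨A * a + B * b * d, A * b + B * a, ?_, ?_⟩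
      · rw [pow_succ, h1]; push_cast; linear_combination (B : K) * (b : K) * hs
      · rw [pow_succ, h2]; push_cast; linear_combination (B : K) * (b : K) * hs

open Polynomial in
lemma aux_root_one (d : ℤ) (K : Type*) [Field K] [CharZero K] (s : K)
    (hs : s ^ 2 = (d : K)) (p : ℕ) (hp : p.Prime) (hp3 : 3 < p)
    (ζ : K) (u v : ℚ) (hζ : ζ = (u : K) + (v : K) * s) (h1 : ζ ^ p = 1) : ζ = 1 := by
  by_contra hne
  have hsum : ∑ i ∈ Finset.range p, ζ ^ i = 0 := by
    rw [geom_sum_eq hne, h1, sub_self, zero_div]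
  set q : ℚ[X] := X ^ 2 + C (-2 * u) * X + C (u ^ 2 - d * v ^ 2) with hq
  have hmonic : q.Monic := by
    unfold q
    monicity!
  have haev : aeval ζ q = 0 := by
    simp only [hq, map_add, map_mul, map_pow, aeval_X, aeval_C, eq_ratCast]
    rw [hζ]
    push_cast
    linear_combination (v : K) ^ 2 * hs
  have hint : IsIntegral ℚ ζ := ⟨q, hmonic, haev⟩
  have hdvd : minpoly ℚ ζ ∣ q := minpoly.dvd ℚ ζ haev
  have hdeg2 : (minpoly ℚ ζ).natDegree ≤ 2 := by
    have := Polynomial.natDegree_le_of_dvd hdvd hmonic.ne_zero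
    have hqd : q.natDegree = 2 := by unfold q; compute_degree!
    omega
  have hcyc : aeval ζ (cyclotomic p ℚ) = 0 := by
    haveI : Fact p.Prime := ⟨hp⟩
    rw [cyclotomic_prime]
    simpa using hsum
  have heq : cyclotomic p ℚ = minpoly ℚ ζ :=
    minpoly.eq_of_irreducible_of_monic (cyclotomic.irreducible_rat hp.pos) hcyc
      (cyclotomic.monic p ℚ)
  have : (minpoly ℚ ζ).natDegree = p - 1 := by
    rw [← heq, natDegree_cyclotomic, Nat.totient_prime hp]
  omega

/-- Let `d` be a squarefree integer with `d ≠ 0, 1`, let `K = ℚ(√d)`, let `p > 3` be a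
prime and `α ∈ ℚ`.  If `(X, Y) ∈ K × K` satisfies `Y² = X^p + α`, and `Y = m + n√d` with
`m, n ∈ ℚ`, then `X ∈ ℚ` if and only if `Im(Y) = 0` or `Re(Y) = 0` (i.e. `n = 0` or
`m = 0`).  Here `K` is realized as a field of characteristic zero generated over `ℚ` by a
square root `s` of `d`. -/
theorem stmt_10 (d : ℤ) (hd : Squarefree d) (hd0 : d ≠ 0) (hd1 : d ≠ 1)
    (K : Type*) [Field K] [CharZero K] (s : K) (hs : s ^ 2 = (d : K))
    (hgen : ∀ w : K, ∃ a b : ℚ, w = (a : K) + (b : K) * s)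
    (p : ℕ) (hp : p.Prime) (hp3 : 3 < p) (α : ℚ)
    (X Y : K) (hXY : Y ^ 2 = X ^ p + (α : K))
    (m n : ℚ) (hY : Y = (m : K) + (n : K) * s) :
    (∃ q : ℚ, X = (q : K)) ↔ (n = 0 ∨ m = 0) := by
  constructor
  · rintro ⟨q, hq⟩
    rw [hY, hq] at hXY
    have key : ((m ^ 2 + n ^ 2 * d - q ^ p - α : ℚ) : K) + ((2 * m * n : ℚ) : K) * s = 0 := by
      push_cast
      linear_combination hXY - (n : K) ^ 2 * hs
    have h2 := (aux_indep d hd hd1 K s hs _ _ key).2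
    have hmn : m * n = 0 := by linarith
    rcases mul_eq_zero.mp hmn with h | h
    · exact Or.inr h
    · exact Or.inl h
  · intro h
    have hY2 : ∃ c : ℚ, Y ^ 2 = (c : K) := by
      rcases h with hn | hm
      · exact ⟨m ^ 2, by rw [hY, hn]; push_cast; ring⟩
      · exact ⟨n ^ 2 * d, by rw [hY, hm]; push_cast; linear_combination (n : K) ^ 2 * hs⟩
    obtain ⟨c, hc⟩ := hY2
    have hXp : X ^ p = ((c - α : ℚ) : K) := by
      push_cast
      linear_combination hc - hXY
    by_cases hX0 : X = 0
    · exact ⟨0, by simp [hX0]⟩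
    obtain ⟨a, b, hX⟩ := hgen X
    obtain ⟨A, B, h1, h2⟩ := aux_conj_pow d K s hs a b p
    rw [hX, h1] at hXp
    have key : ((A - (c - α) : ℚ) : K) + (B : K) * s = 0 := by
      push_cast at hXp ⊢
      linear_combination hXp
    obtain ⟨hA, hB⟩ := aux_indep d hd hd1 K s hs _ _ key
    have hX'p : ((a : K) - (b : K) * s) ^ p = X ^ p := by
      rw [hX, h1, h2, hB]
      push_cast
      ring
    have hXpne : X ^ p ≠ 0 := pow_ne_zero p hX0
    set ζ : K := ((a : K) - (b : K) * s) / X with hζdef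
    have hζp : ζ ^ p = 1 := by
      rw [hζdef, div_pow, hX'p, div_self hXpne]
    obtain ⟨u, v, hζ⟩ := hgen ζ
    have hζ1 : ζ = 1 := aux_root_one d K s hs p hp hp3 ζ u v hζ hζp
    have hXeq : (a : K) - (b : K) * s = X := by
      rw [hζdef] at hζ1
      field_simp at hζ1
      exact hζ1
    have hb : (b : K) * s = 0 := by
      have := hXeq.trans hX
      linear_combination -this / 2
    have hs0 : s ≠ 0 := by
      intro h0
      rw [h0] at hs
      have : (d : K) = 0 := by simpa using hs.symm
      exact hd0 (by exact_mod_cast this)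
    have hbK : (b : K) = 0 := by
      rcases mul_eq_zero.mp hb with h | h
      · exact h
      · exact absurd h hs0
    exact ⟨a, by rw [hX, hbK]; ring⟩
end

section
/- Let K be a field of characteristic zero, p an odd prime, and A, B, C integers with BC ≠ 0. If x, y, z ∈ K satisfy A x^p + B y^p + C z^p = 0 and x ≠ 0, then the elements X = −BC·y·z/x² and Y = (−BC)^{(p−1)/2}·(B y^p − C z^p)/(2 x^p) of K satisfy Y² = X^p + A²(BC)^{p−1}/4. -/
/-!
Put `u = B y^p`, `v = C z^p` and `w = x^p`, so that `A w = -(u + v)`. Since `p` is odd,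
`Y² = (BC)^(p-1) (u - v)² / (4 w²)` and `X^p = -(BC)^(p-1) u v / w²`, and the claim reduces to
`(u - v)² + 4 u v = (u + v)² = A² w²`.
-/

theorem neg_pow_div_two_sq {R : Type*} [Monoid R] [HasDistribNeg R] {n : ℕ} (hn : Odd n)
    (c : R) : ((-c) ^ ((n - 1) / 2)) ^ 2 = c ^ (n - 1) := by
  obtain ⟨k, rfl⟩ := hn
  rw [← pow_mul, show (2 * k + 1 - 1) / 2 * 2 = 2 * k + 1 - 1 by omega]
  exact Even.neg_pow ⟨k, by omega⟩ c

theorem neg_mul_mul_div_sq_pow {K : Type*} [Field K] {n : ℕ} (hn : Odd n) (b c y z x : K) :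
    (-(b * c) * y * z / x ^ 2) ^ n =
      -((b * c) ^ (n - 1) * (b * y ^ n) * (c * z ^ n)) / (x ^ n) ^ 2 := by
  obtain ⟨k, rfl⟩ := hn
  rw [neg_mul, neg_mul, neg_div, Odd.neg_pow ⟨k, rfl⟩, div_pow, ← pow_mul, ← pow_mul',
    show 2 * k + 1 - 1 = 2 * k by omega]
  ring

theorem sq_mul_sub_div_two_mul {K : Type*} [Field K] [NeZero (2 : K)] {a u v w : K}
    (hw : w ≠ 0) (h : a * w + u + v = 0) (s : K) :
    (s * (u - v) / (2 * w)) ^ 2 = -(s ^ 2 * u * v) / w ^ 2 + a ^ 2 * s ^ 2 / 4 := by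
  have h4 : (4 : K) ≠ 0 := by simpa [show (4 : K) = 2 ^ 2 by norm_num] using NeZero.ne (2 : K)
  field_simp
  linear_combination 4 * s ^ 2 * (u + v - a * w) * h

theorem stmt_11_general (K : Type*) [Field K] [CharZero K]
    (p : ℕ) (hodd : Odd p)
    (A B C : ℤ)
    (x y z : K) (heq : (A : K) * x ^ p + (B : K) * y ^ p + (C : K) * z ^ p = 0)
    (hx : x ≠ 0) :
    ((((-(B * C)) ^ ((p - 1) / 2) : ℤ) : K) * ((B : K) * y ^ p - (C : K) * z ^ p)
        / (2 * x ^ p)) ^ 2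
      = (((-(B * C) : ℤ) : K) * y * z / x ^ 2) ^ p
        + ((A : K) ^ 2 * (((B * C) ^ (p - 1) : ℤ) : K)) / 4 := by
  push_cast
  rw [neg_mul_mul_div_sq_pow hodd, sq_mul_sub_div_two_mul (pow_ne_zero p hx) heq,
    neg_pow_div_two_sq hodd]

/-- Let `K` be a field of characteristic zero, `p` an odd prime, and `A, B, C` integers
with `BC ≠ 0`.  If `x, y, z ∈ K` satisfy `A x^p + B y^p + C z^p = 0` and `x ≠ 0`, then the
elements `X = −BC·y·z/x²` and `Y = (−BC)^((p−1)/2)·(B y^p − C z^p)/(2 x^p)` of `K`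
satisfy `Y² = X^p + A²(BC)^(p−1)/4`. -/
theorem stmt_11 (K : Type*) [Field K] [CharZero K]
    (p : ℕ) (hp : p.Prime) (hodd : Odd p)
    (A B C : ℤ) (hBC : B * C ≠ 0)
    (x y z : K) (heq : (A : K) * x ^ p + (B : K) * y ^ p + (C : K) * z ^ p = 0)
    (hx : x ≠ 0) :
    ((((-(B * C)) ^ ((p - 1) / 2) : ℤ) : K) * ((B : K) * y ^ p - (C : K) * z ^ p)
        / (2 * x ^ p)) ^ 2
      = (((-(B * C) : ℤ) : K) * y * z / x ^ 2) ^ p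
        + ((A : K) ^ 2 * (((B * C) ^ (p - 1) : ℤ) : K)) / 4 :=
  stmt_11_general K p hodd A B C x y z heq hx
end

section
/- Let d be a squarefree integer with d ≠ 0, 1, K = ℚ(√d), p > 3 a prime, and A, B, C nonzero pth-powerfree integers. Suppose (x, y, z) ∈ K³ is a nontrivial solution of A x^p + B y^p + C z^p = 0 (i.e., xyz ≠ 0) such that y = γ x for some rational number γ. Then there exist nonzero, pairwise coprime integers a, b, c with A a^p + B b^p + C c^p = 0. -/
/-!
Writing `y = γ x` and `z = w x`, the equation becomes `A + B γ ^ p + C w ^ p = 0`, so `w ^ p` is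
rational. An element of a field of degree at most `2` over `ℚ` whose `p`-th power is rational is
itself rational once `p > 3`: otherwise its minimal polynomial is either `X ^ p - r` (when `r` is
not a `p`-th power) or, after dividing by a rational `p`-th root of `r`, the `p`-th cyclotomic
polynomial, of degree `p` resp. `p - 1 > 2`. Clearing denominators gives an integer solution, and
a solution with `|a|` minimal is pairwise coprime: as the coefficients are `p`-th-power-free, a
prime dividing two of `a, b, c` divides the third, and it could be cancelled.
-/

open Polynomial Module

section RationalRoots

variable {L : Type*} [Field L] [CharZero L] {p : ℕ}

theorem natDegree_minpoly_rat_of_pow_eq_one (hp : p.Prime) {ζ : L} (hζ : ζ ^ p = 1)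
    (hζ1 : ζ ≠ 1) : (minpoly ℚ ζ).natDegree = p - 1 := by
  have : Fact p.Prime := ⟨hp⟩
  have hprim : IsPrimitiveRoot ζ p := orderOf_eq_prime hζ hζ1 ▸ IsPrimitiveRoot.orderOf ζ
  rw [← cyclotomic_eq_minpoly_rat hprim hp.pos, natDegree_cyclotomic, Nat.totient_prime hp]

theorem natDegree_minpoly_rat_of_pow_eq (hp : p.Prime) {w : L} {r : ℚ} (hw : w ^ p = r)
    (hr : ∀ t : ℚ, t ^ p ≠ r) : (minpoly ℚ w).natDegree = p := by
  rw [← minpoly.eq_of_irreducible_of_monic (X_pow_sub_C_irreducible_of_prime hp hr)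
    (by simp [hw]) (monic_X_pow_sub_C r hp.ne_zero), natDegree_X_pow_sub_C]

theorem exists_rat_eq_of_pow_eq_rat [FiniteDimensional ℚ L] (hp : p.Prime)
    (hL : finrank ℚ L < p - 1) {w : L} {r : ℚ} (hw : w ^ p = r) : ∃ t : ℚ, w = t := by
  have hdeg (v : L) : (minpoly ℚ v).natDegree < p - 1 := (minpoly.natDegree_le v).trans_lt hL
  by_cases hr : ∃ t : ℚ, t ^ p = r
  · obtain ⟨t, rfl⟩ := hr
    by_cases ht : t = 0
    · exact ⟨0, by simpa [ht, hp.ne_zero] using hw⟩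
    have ht' : (t : L) ≠ 0 := by exact_mod_cast ht
    refine ⟨t, by_contra fun hne => ?_⟩
    have hζ : (w / t) ^ p = 1 := by
      rw [div_pow, hw, Rat.cast_pow, div_self (pow_ne_zero p ht')]
    have := natDegree_minpoly_rat_of_pow_eq_one hp hζ (by rwa [ne_eq, div_eq_one_iff_eq ht'])
    exact (hdeg (w / t)).ne this
  · have := natDegree_minpoly_rat_of_pow_eq hp hw (by simpa using hr)
    have := hdeg w
    omega

end RationalRoots

section QuadraticField

variable {K : Type*} [Field K] [CharZero K] {s : K}

theorem span_range_one_s_eq_top (hgen : ∀ w : K, ∃ a b : ℚ, w = (a : K) + (b : K) * s) :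
    Submodule.span ℚ (Set.range ![1, s]) = ⊤ := by
  refine Submodule.eq_top_iff'.mpr fun w => ?_
  obtain ⟨a, b, rfl⟩ := hgen w
  rw [Matrix.range_cons_cons_empty, Submodule.mem_span_pair]
  exact ⟨a, b, by simp [Rat.smul_def]⟩

theorem finiteDimensional_of_forall_eq_add_mul
    (hgen : ∀ w : K, ∃ a b : ℚ, w = (a : K) + (b : K) * s) : FiniteDimensional ℚ K :=
  .of_fg_top (span_range_one_s_eq_top hgen ▸ Submodule.fg_span (Set.finite_range _))

theorem finrank_le_two_of_forall_eq_add_mul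
    (hgen : ∀ w : K, ∃ a b : ℚ, w = (a : K) + (b : K) * s) : finrank ℚ K ≤ 2 := by
  simpa using finrank_le_of_span_eq_top (span_range_one_s_eq_top hgen)

end QuadraticField

section Descent

variable {p : ℕ} {A B C : ℤ}

theorem exists_int_add_pow_eq_zero_of_rat {γ δ : ℚ} (hγ : γ ≠ 0) (hδ : δ ≠ 0)
    (h : (A : ℚ) + B * γ ^ p + C * δ ^ p = 0) :
    ∃ a b c : ℤ, a ≠ 0 ∧ b ≠ 0 ∧ c ≠ 0 ∧ A * a ^ p + B * b ^ p + C * c ^ p = 0 := by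
  have hγd : (γ.den : ℤ) ≠ 0 := by exact_mod_cast γ.den_ne_zero
  have hδd : (δ.den : ℤ) ≠ 0 := by exact_mod_cast δ.den_ne_zero
  refine ⟨γ.den * δ.den, γ.num * δ.den, δ.num * γ.den, mul_ne_zero hγd hδd,
    mul_ne_zero (Rat.num_ne_zero.mpr hγ) hδd, mul_ne_zero (Rat.num_ne_zero.mpr hδ) hγd, ?_⟩
  have hQ : ((A * (γ.den * δ.den) ^ p + B * (γ.num * δ.den) ^ p + C * (δ.num * γ.den) ^ p : ℤ)
      : ℚ) = 0 := by
    push_cast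
    rw [← Rat.mul_den_eq_num γ, ← Rat.mul_den_eq_num δ]
    linear_combination ((γ.den : ℚ) * δ.den) ^ p * h
  exact_mod_cast hQ

theorem dvd_of_dvd_of_dvd_of_add_pow_eq_zero (hCpf : ∀ q : ℤ, Prime q → ¬ q ^ p ∣ C)
    {q a b c : ℤ} (hq : Prime q) (ha : q ∣ a) (hb : q ∣ b)
    (h : A * a ^ p + B * b ^ p + C * c ^ p = 0) : q ∣ c := by
  by_contra hc
  have hdvd : q ^ p ∣ C * c ^ p := by
    rw [show C * c ^ p = -(A * a ^ p + B * b ^ p) by linear_combination h]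
    exact (dvd_add (dvd_mul_of_dvd_right (pow_dvd_pow_of_dvd ha p) A)
      (dvd_mul_of_dvd_right (pow_dvd_pow_of_dvd hb p) B)).neg_right
  exact hCpf q hq ((hq.coprime_iff_not_dvd.mpr hc).pow.dvd_of_dvd_mul_right hdvd)

theorem add_pow_eq_zero_of_mul {q a b c : ℤ} (hq : q ≠ 0)
    (h : A * (q * a) ^ p + B * (q * b) ^ p + C * (q * c) ^ p = 0) :
    A * a ^ p + B * b ^ p + C * c ^ p = 0 := by
  refine (mul_eq_zero.mp ?_).resolve_left (pow_ne_zero p hq)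
  linear_combination h

theorem exists_isCoprime_of_add_pow_eq_zero (hApf : ∀ q : ℤ, Prime q → ¬ q ^ p ∣ A)
    (hBpf : ∀ q : ℤ, Prime q → ¬ q ^ p ∣ B) (hCpf : ∀ q : ℤ, Prime q → ¬ q ^ p ∣ C)
    (h : ∃ a b c : ℤ, a ≠ 0 ∧ b ≠ 0 ∧ c ≠ 0 ∧ A * a ^ p + B * b ^ p + C * c ^ p = 0) :
    ∃ a b c : ℤ, a ≠ 0 ∧ b ≠ 0 ∧ c ≠ 0 ∧
      IsCoprime a b ∧ IsCoprime a c ∧ IsCoprime b c ∧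
      A * a ^ p + B * b ^ p + C * c ^ p = 0 := by
  classical
  have hex : ∃ n : ℕ, ∃ a b c : ℤ, a.natAbs = n ∧ a ≠ 0 ∧ b ≠ 0 ∧ c ≠ 0 ∧
      A * a ^ p + B * b ^ p + C * c ^ p = 0 := by
    obtain ⟨a, b, c, habc⟩ := h
    exact ⟨_, a, b, c, rfl, habc⟩
  obtain ⟨a, b, c, hmin, ha, hb, hc, heq⟩ := Nat.find_spec hex
  have hprimitive : ∀ q : ℤ, Prime q → q ∣ a → q ∣ b → q ∣ c → False := by
    rintro q hq ⟨a', rfl⟩ ⟨b', rfl⟩ ⟨c', rfl⟩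
    have ha' : a' ≠ 0 := right_ne_zero_of_mul ha
    have hlt : a'.natAbs < Nat.find hex := by
      have := (Int.prime_iff_natAbs_prime.mp hq).two_le
      have := Int.natAbs_pos.mpr ha'
      rw [← hmin, Int.natAbs_mul]
      nlinarith
    exact Nat.find_min hex hlt ⟨a', b', c', rfl, ha', right_ne_zero_of_mul hb,
      right_ne_zero_of_mul hc, add_pow_eq_zero_of_mul hq.ne_zero heq⟩
  refine ⟨a, b, c, ha, hb, hc, ?_, ?_, ?_, heq⟩
  · refine isCoprime_of_prime_dvd (by simp [ha]) fun q hq hqa hqb => ?_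
    exact hprimitive q hq hqa hqb (dvd_of_dvd_of_dvd_of_add_pow_eq_zero hCpf hq hqa hqb heq)
  · refine isCoprime_of_prime_dvd (by simp [ha]) fun q hq hqa hqc => ?_
    exact hprimitive q hq hqa (dvd_of_dvd_of_dvd_of_add_pow_eq_zero (A := A) (B := C) hBpf hq hqa
      hqc (by linear_combination heq)) hqc
  · refine isCoprime_of_prime_dvd (by simp [hb]) fun q hq hqb hqc => ?_
    exact hprimitive q hq (dvd_of_dvd_of_dvd_of_add_pow_eq_zero (A := B) (B := C) hApf hq hqb
      hqc (by linear_combination heq)) hqb hqc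

end Descent

theorem stmt_12_general
    (K : Type*) [Field K] [CharZero K] (s : K)
    (hgen : ∀ w : K, ∃ a b : ℚ, w = (a : K) + (b : K) * s)
    (p : ℕ) (hp : p.Prime) (hp3 : 3 < p)
    (A B C : ℤ) (hC : C ≠ 0)
    (hApf : ∀ q : ℤ, Prime q → ¬ q ^ p ∣ A)
    (hBpf : ∀ q : ℤ, Prime q → ¬ q ^ p ∣ B)
    (hCpf : ∀ q : ℤ, Prime q → ¬ q ^ p ∣ C)
    (x y z : K) (heq : (A : K) * x ^ p + (B : K) * y ^ p + (C : K) * z ^ p = 0)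
    (hxyz : x * y * z ≠ 0)
    (γ : ℚ) (hγ : y = (γ : K) * x) :
    ∃ a b c : ℤ, a ≠ 0 ∧ b ≠ 0 ∧ c ≠ 0 ∧
      IsCoprime a b ∧ IsCoprime a c ∧ IsCoprime b c ∧
      A * a ^ p + B * b ^ p + C * c ^ p = 0 := by
  have hx : x ≠ 0 := left_ne_zero_of_mul (left_ne_zero_of_mul hxyz)
  have hy : y ≠ 0 := right_ne_zero_of_mul (left_ne_zero_of_mul hxyz)
  have hz : z ≠ 0 := right_ne_zero_of_mul hxyz
  have hγ0 : γ ≠ 0 := by rintro rfl; simp [hγ] at hy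
  subst hγ
  have : FiniteDimensional ℚ K := finiteDimensional_of_forall_eq_add_mul hgen
  have hK : finrank ℚ K < p - 1 := by have := finrank_le_two_of_forall_eq_add_mul hgen; omega
  have hCK : (C : K) ≠ 0 := by exact_mod_cast hC
  have hzx : (z / x) ^ p = ((-(A + B * γ ^ p) / C : ℚ) : K) := by
    push_cast
    rw [div_pow, div_eq_div_iff (pow_ne_zero p hx) hCK]
    linear_combination heq
  obtain ⟨δ, hδ⟩ := exists_rat_eq_of_pow_eq_rat hp hK hzx
  have hδ0 : δ ≠ 0 := by rintro rfl; simp [hx, hz] at hδ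
  refine exists_isCoprime_of_add_pow_eq_zero hApf hBpf hCpf
    (exists_int_add_pow_eq_zero_of_rat hγ0 hδ0 ?_)
  have hzδ : z = δ * x := by rw [← hδ, div_mul_cancel₀ z hx]
  have hQ : ((A + B * γ ^ p + C * δ ^ p : ℚ) : K) * x ^ p = 0 := by
    push_cast
    rw [← heq, hzδ]
    ring
  exact_mod_cast (mul_eq_zero.mp hQ).resolve_right (pow_ne_zero p hx)

/-- Let `d` be a squarefree integer with `d ≠ 0, 1`, `K = ℚ(√d)`, `p > 3` a prime, and
`A, B, C` nonzero `p`th-powerfree integers.  Suppose `(x, y, z) ∈ K³` is a nontrivial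
solution of `A x^p + B y^p + C z^p = 0` (i.e. `xyz ≠ 0`) such that `y = γ x` for some
rational number `γ`.  Then there exist nonzero, pairwise coprime integers `a, b, c` with
`A a^p + B b^p + C c^p = 0`.  Here `K` is realized as a field of characteristic zero
generated over `ℚ` by a square root `s` of `d`, and an integer `A` is `p`th-powerfree if
`q^p ∤ A` for every prime `q`. -/
theorem stmt_12 (d : ℤ) (hd : Squarefree d) (hd0 : d ≠ 0) (hd1 : d ≠ 1)
    (K : Type*) [Field K] [CharZero K] (s : K) (hs : s ^ 2 = (d : K))
    (hgen : ∀ w : K, ∃ a b : ℚ, w = (a : K) + (b : K) * s)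
    (p : ℕ) (hp : p.Prime) (hp3 : 3 < p)
    (A B C : ℤ) (hA : A ≠ 0) (hB : B ≠ 0) (hC : C ≠ 0)
    (hApf : ∀ q : ℤ, Prime q → ¬ q ^ p ∣ A)
    (hBpf : ∀ q : ℤ, Prime q → ¬ q ^ p ∣ B)
    (hCpf : ∀ q : ℤ, Prime q → ¬ q ^ p ∣ C)
    (x y z : K) (heq : (A : K) * x ^ p + (B : K) * y ^ p + (C : K) * z ^ p = 0)
    (hxyz : x * y * z ≠ 0)
    (γ : ℚ) (hγ : y = (γ : K) * x) :
    ∃ a b c : ℤ, a ≠ 0 ∧ b ≠ 0 ∧ c ≠ 0 ∧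
      IsCoprime a b ∧ IsCoprime a c ∧ IsCoprime b c ∧
      A * a ^ p + B * b ^ p + C * c ^ p = 0 :=
  stmt_12_general K s hgen p hp hp3 A B C hC hApf hBpf hCpf x y z heq hxyz γ hγ
end

section
/- Let d be a squarefree integer with d ≠ 0, 1, K = ℚ(√d), p > 3 a prime, and A, B, C nonzero pth-powerfree integers with gcd(B, C) = 1. Let (x, y, z) ∈ K³ be a nontrivial solution of A x^p + B y^p + C z^p = 0 (xyz ≠ 0), and suppose Y := (−BC)^{(p−1)/2}(B y^p − C z^p)/(2 x^p) has Re(Y) = 0 (i.e., Y = n√d with n ∈ ℚ). Then BC = ±1, the element X := −BC·y·z/x² lies in ℚ, and there exists u ∈ K with N(u) = 1 such that y = u·z̄. -/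
/-!
Conjugating both the equation and the relation `Y = n √d` (whose right side changes sign) and
combining the four identities gives `B (y x̄)^p = C (x z̄)^p`, so `(y x̄ / (x z̄))^p = C / B` is
rational. As `[K : ℚ] ≤ 2 < p - 1`, `K` contains no nontrivial `p`th root of unity, so a `p`th
root of a rational number in `K` is fixed by conjugation, hence rational: `y x̄ = t x z̄` with
`B t^p = C`, `t ∈ ℚ`. Power-freeness and coprimality then force `t = ±1` and `B, C = ±1`; finally
`u = t x / x̄` has norm one, and `y x̄ = t x z̄` together with its conjugate shows that `X` is fixed
by conjugation.
-/

open Polynomial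

theorem eq_one_of_pow_eq_one_of_natDegree_minpoly_lt {K : Type*} [Field K] [CharZero K]
    {p : ℕ} (hp : p.Prime) {ζ : K} (hζ : ζ ^ p = 1) (hdeg : (minpoly ℚ ζ).natDegree < p - 1) :
    ζ = 1 := by
  by_contra hne
  have hprim : IsPrimitiveRoot ζ p := by
    rw [← (hp.eq_one_or_self_of_dvd _ (orderOf_dvd_of_pow_eq_one hζ)).resolve_left
      (mt orderOf_eq_one_iff.mp hne)]
    exact IsPrimitiveRoot.orderOf ζ
  rw [← cyclotomic_eq_minpoly_rat hprim hp.pos, natDegree_cyclotomic,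
    Nat.totient_prime hp] at hdeg
  exact hdeg.false

def IsPowerFree (p : ℕ) (n : ℤ) : Prop := ∀ q : ℤ, Prime q → ¬ q ^ p ∣ n

theorem IsPowerFree.isUnit_of_pow_dvd {p : ℕ} {n : ℤ} (h : IsPowerFree p n) {a : ℤ}
    (ha : a ^ p ∣ n) : IsUnit a := by
  by_contra hu
  obtain ⟨q, hq, hqa⟩ := Int.exists_prime_and_dvd (mt Int.isUnit_iff_natAbs_eq.mpr hu)
  exact h q hq ((pow_dvd_pow_of_dvd hqa p).trans ha)

theorem IsPowerFree.isUnit_and_isUnit_of_mul_pow_eq {p : ℕ} {B C : ℤ} (hB : IsPowerFree p B)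
    (hC : IsPowerFree p C) {a b : ℤ} (hab : IsCoprime a b) (h : B * a ^ p = C * b ^ p) :
    IsUnit a ∧ IsUnit b :=
  ⟨hC.isUnit_of_pow_dvd (hab.pow.dvd_of_dvd_mul_right ⟨B, by rw [← h, mul_comm]⟩),
    hB.isUnit_of_pow_dvd (hab.symm.pow.dvd_of_dvd_mul_right ⟨C, by rw [h, mul_comm]⟩)⟩

theorem IsPowerFree.exists_isUnit_eq_of_mul_pow_eq {p : ℕ} {B C : ℤ} (hB : IsPowerFree p B)
    (hC : IsPowerFree p C) {t : ℚ} (ht : (B : ℚ) * t ^ p = C) : ∃ m : ℤ, IsUnit m ∧ t = m := by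
  have hnd : B * t.num ^ p = C * (t.den : ℤ) ^ p := by
    have : (B : ℚ) * t.num ^ p = C * t.den ^ p := by
      rw [← Rat.mul_den_eq_num, mul_pow, ← mul_assoc, ht]
    exact_mod_cast this
  have hcop : IsCoprime t.num t.den := Int.isCoprime_iff_gcd_eq_one.mpr t.reduced
  obtain ⟨hnum, hden⟩ := hB.isUnit_and_isUnit_of_mul_pow_eq hC hcop hnd
  have hden1 : t.den = 1 := Nat.isUnit_iff.mp (Int.ofNat_isUnit.mp hden)
  exact ⟨t.num, hnum, (Rat.coe_int_num_of_den_eq_one hden1).symm⟩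

theorem IsCoprime.isUnit_mul_of_associated {R : Type*} [CommSemiring R] {a b : R}
    (h : IsCoprime a b) (hab : Associated a b) : IsUnit (a * b) :=
  (h.isUnit_of_dvd' dvd_rfl hab.dvd).mul (h.isUnit_of_dvd' hab.symm.dvd dvd_rfl)

section QuadraticField

variable {K : Type*} [Field K] [CharZero K] {s : K} {σ : K ≃+* K}

theorem span_one_pair_eq_top (hgen : ∀ w : K, ∃ a b : ℚ, w = a + b * s) :
    Submodule.span ℚ ({1, s} : Set K) = ⊤ := by
  refine Submodule.eq_top_iff'.mpr fun w => Submodule.mem_span_pair.mpr ?_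
  obtain ⟨a, b, rfl⟩ := hgen w
  exact ⟨a, b, by simp [Rat.smul_def]⟩

theorem natDegree_minpoly_le_two_s16 (hgen : ∀ w : K, ∃ a b : ℚ, w = a + b * s) (w : K) :
    (minpoly ℚ w).natDegree ≤ 2 := by
  have : Module.Finite ℚ K :=
    Module.finite_def.mpr (span_one_pair_eq_top hgen ▸ Submodule.fg_span (Set.toFinite _))
  calc (minpoly ℚ w).natDegree ≤ (⊤ : Submodule ℚ K).spanFinrank :=
        minpoly.natDegree_le_spanFinrank ℚ w
    _ ≤ ({1, s} : Set K).ncard := by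
        rw [← span_one_pair_eq_top hgen]
        exact Submodule.spanFinrank_span_le_ncard_of_finite (Set.toFinite _)
    _ ≤ 2 := (Set.ncard_insert_le _ _).trans (by rw [Set.ncard_singleton])

theorem conj_add_mul (hσ : σ s = -s) (a b : ℚ) : σ (a + b * s) = a - b * s := by
  rw [map_add, map_mul, hσ, map_ratCast, map_ratCast, mul_neg, sub_eq_add_neg]

theorem conj_conj (hgen : ∀ w : K, ∃ a b : ℚ, w = a + b * s) (hσ : σ s = -s) (w : K) :
    σ (σ w) = w := by
  obtain ⟨a, b, rfl⟩ := hgen w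
  rw [conj_add_mul hσ, map_sub, map_mul, hσ, map_ratCast, map_ratCast, mul_neg, sub_neg_eq_add]

theorem exists_rat_eq_of_conj_eq (hgen : ∀ w : K, ∃ a b : ℚ, w = a + b * s) (hσ : σ s = -s)
    {w : K} (hw : σ w = w) : ∃ q : ℚ, w = q := by
  obtain ⟨a, b, rfl⟩ := hgen w
  rw [conj_add_mul hσ] at hw
  have hbs : (b : K) * s = 0 := by linear_combination -hw / 2
  exact ⟨a, by rw [hbs, add_zero]⟩

theorem exists_rat_eq_of_pow_eq_rat_s16 (hgen : ∀ w : K, ∃ a b : ℚ, w = a + b * s) (hσ : σ s = -s)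
    {p : ℕ} (hp : p.Prime) (hp3 : 3 < p) {w : K} {q : ℚ} (hw : w ^ p = q) :
    ∃ t : ℚ, w = t := by
  rcases eq_or_ne w 0 with rfl | hw0
  · exact ⟨0, Rat.cast_zero.symm⟩
  have hζ : (σ w / w) ^ p = 1 := by
    rw [div_pow, ← map_pow, hw, map_ratCast, div_self (hw ▸ pow_ne_zero p hw0)]
  have hfix : σ w / w = 1 := eq_one_of_pow_eq_one_of_natDegree_minpoly_lt hp hζ
    ((natDegree_minpoly_le_two_s16 hgen _).trans_lt (by omega))
  exact exists_rat_eq_of_conj_eq hgen hσ ((div_eq_one_iff_eq hw0).mp hfix)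

theorem mul_pow_mul_conj_eq_of_re_eq_zero (hσ : σ s = -s) {p : ℕ} {A B C e : ℤ} (he : e ≠ 0)
    {x y z : K} (hx : x ≠ 0) {n : ℚ} (heq : (A : K) * x ^ p + B * y ^ p + C * z ^ p = 0)
    (hY : (e : K) * (B * y ^ p - C * z ^ p) / (2 * x ^ p) = n * s) :
    (B : K) * (y * σ x) ^ p = C * (x * σ z) ^ p := by
  rw [div_eq_iff (mul_ne_zero two_ne_zero (pow_ne_zero p hx))] at hY
  have heq' := congrArg σ heq
  have hY' := congrArg σ hY
  simp only [map_add, map_sub, map_mul, map_pow, map_intCast, map_ratCast, map_ofNat, map_zero,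
    hσ] at heq' hY'
  have hdiff : ((B : K) * y ^ p - C * z ^ p) * σ x ^ p + (B * σ y ^ p - C * σ z ^ p) * x ^ p = 0 :=
    mul_left_cancel₀ (Int.cast_ne_zero.mpr he) (by linear_combination σ x ^ p * hY + x ^ p * hY')
  linear_combination (σ x ^ p * heq - x ^ p * heq' + hdiff) / 2

end QuadraticField

theorem stmt_16_general (K : Type*) [Field K] [CharZero K] (s : K)
    (hgen : ∀ w : K, ∃ a b : ℚ, w = (a : K) + (b : K) * s)
    (σ : K ≃+* K) (hσ : σ s = -s)
    (p : ℕ) (hp : p.Prime) (hp3 : 3 < p)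
    (A B C : ℤ) (hB : B ≠ 0) (hC : C ≠ 0)
    (hBpf : ∀ q : ℤ, Prime q → ¬ q ^ p ∣ B)
    (hCpf : ∀ q : ℤ, Prime q → ¬ q ^ p ∣ C)
    (hBCcop : IsCoprime B C)
    (x y z : K) (heq : (A : K) * x ^ p + (B : K) * y ^ p + (C : K) * z ^ p = 0)
    (hxyz : x * y * z ≠ 0)
    (n : ℚ)
    (hY : (((-(B * C)) ^ ((p - 1) / 2) : ℤ) : K) * ((B : K) * y ^ p - (C : K) * z ^ p)
        / (2 * x ^ p) = (n : K) * s) :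
    (B * C = 1 ∨ B * C = -1)
      ∧ (∃ q : ℚ, ((-(B * C) : ℤ) : K) * y * z / x ^ 2 = (q : K))
      ∧ ∃ u : K, u * σ u = 1 ∧ y = u * σ z := by
  have hx : x ≠ 0 := left_ne_zero_of_mul (left_ne_zero_of_mul hxyz)
  have hσx : σ x ≠ 0 := (map_ne_zero σ).mpr hx
  have hxz : x * σ z ≠ 0 := mul_ne_zero hx ((map_ne_zero σ).mpr (right_ne_zero_of_mul hxyz))
  have hkey : (B : K) * (y * σ x) ^ p = C * (x * σ z) ^ p :=
    mul_pow_mul_conj_eq_of_re_eq_zero hσ (pow_ne_zero _ (neg_ne_zero.mpr (mul_ne_zero hB hC))) hx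
      heq hY
  have hratio : (y * σ x / (x * σ z)) ^ p = ((C / B : ℚ) : K) := by
    rw [div_pow, Rat.cast_div, Rat.cast_intCast, Rat.cast_intCast,
      div_eq_div_iff (pow_ne_zero _ hxz) (Int.cast_ne_zero.mpr hB)]
    linear_combination hkey
  obtain ⟨t, ht⟩ := exists_rat_eq_of_pow_eq_rat_s16 hgen hσ hp hp3 hratio
  have hBt : (B : ℚ) * t ^ p = C := by
    have : t ^ p = (C / B : ℚ) := Rat.cast_injective (α := K) (by rw [Rat.cast_pow, ← ht, hratio])
    rw [this, mul_div_cancel₀ _ (Int.cast_ne_zero.mpr hB)]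
  obtain ⟨m, hm, rfl⟩ := IsPowerFree.exists_isUnit_eq_of_mul_pow_eq hBpf hCpf hBt
  have hBm : B * m ^ p = C := by exact_mod_cast hBt
  have hm2 : (m : K) ^ 2 = 1 := by rw [← Int.cast_pow, Int.isUnit_sq hm, Int.cast_one]
  have hyx : y * σ x = m * (x * σ z) := by rw [← Rat.cast_intCast, ← ht, div_mul_cancel₀ _ hxz]
  have hyx' : σ y * x = m * (σ x * z) := by
    simpa only [map_mul, map_intCast, conj_conj hgen hσ] using congrArg σ hyx
  refine ⟨Int.isUnit_iff.mp (hBCcop.isUnit_mul_of_associated ⟨(hm.pow p).unit, hBm⟩), ?_,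
    m * x / σ x, ?_, ?_⟩
  · refine exists_rat_eq_of_conj_eq hgen hσ ?_
    rw [map_div₀, map_mul, map_mul, map_pow, map_intCast,
      div_eq_div_iff (pow_ne_zero 2 hσx) (pow_ne_zero 2 hx)]
    linear_combination ((-(B * C) : ℤ) : K) * (σ z * x * hyx' - z * σ x * hyx)
  · rw [map_div₀, map_mul, map_intCast, conj_conj hgen hσ, div_mul_div_comm,
      div_eq_one_iff_eq (mul_ne_zero hσx hx)]
    linear_combination x * σ x * hm2
  · rw [div_mul_eq_mul_div, eq_div_iff hσx]
    linear_combination hyx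

/-- Let `d` be a squarefree integer with `d ≠ 0, 1`, `K = ℚ(√d)`, `p > 3` a prime, and
`A, B, C` nonzero `p`th-powerfree integers with `gcd(B, C) = 1`.  Let `(x, y, z) ∈ K³` be
a nontrivial solution of `A x^p + B y^p + C z^p = 0` (`xyz ≠ 0`), and suppose
`Y := (−BC)^((p−1)/2)(B y^p − C z^p)/(2 x^p)` has `Re(Y) = 0`, i.e. `Y = n√d` with
`n ∈ ℚ`.  Then `BC = ±1`, the element `X := −BC·y·z/x²` lies in `ℚ`, and there exists
`u ∈ K` with `N(u) = 1` such that `y = u·z̄`.  Here `K` is realized as a field of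
characteristic zero generated over `ℚ` by a square root `s` of `d`, conjugation is the
ring automorphism `σ` of `K` with `σ(√d) = −√d`, and `N(u) = u·σ(u)`. -/
theorem stmt_16 (d : ℤ) (hd : Squarefree d) (hd0 : d ≠ 0) (hd1 : d ≠ 1)
    (K : Type*) [Field K] [CharZero K] (s : K) (hs : s ^ 2 = (d : K))
    (hgen : ∀ w : K, ∃ a b : ℚ, w = (a : K) + (b : K) * s)
    (σ : K ≃+* K) (hσ : σ s = -s)
    (p : ℕ) (hp : p.Prime) (hp3 : 3 < p)
    (A B C : ℤ) (hA : A ≠ 0) (hB : B ≠ 0) (hC : C ≠ 0)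
    (hApf : ∀ q : ℤ, Prime q → ¬ q ^ p ∣ A)
    (hBpf : ∀ q : ℤ, Prime q → ¬ q ^ p ∣ B)
    (hCpf : ∀ q : ℤ, Prime q → ¬ q ^ p ∣ C)
    (hBCcop : IsCoprime B C)
    (x y z : K) (heq : (A : K) * x ^ p + (B : K) * y ^ p + (C : K) * z ^ p = 0)
    (hxyz : x * y * z ≠ 0)
    (n : ℚ)
    (hY : (((-(B * C)) ^ ((p - 1) / 2) : ℤ) : K) * ((B : K) * y ^ p - (C : K) * z ^ p)
        / (2 * x ^ p) = (n : K) * s) :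
    (B * C = 1 ∨ B * C = -1)
      ∧ (∃ q : ℚ, ((-(B * C) : ℤ) : K) * y * z / x ^ 2 = (q : K))
      ∧ ∃ u : K, u * σ u = 1 ∧ y = u * σ z :=
  stmt_16_general K s hgen σ hσ p hp hp3 A B C hB hC hBpf hCpf hBCcop x y z heq hxyz n hY
end

section
/- Let d be a squarefree integer with d ≠ 0, 1, K = ℚ(√d), p > 3 a prime, and A, B, C nonzero pth-powerfree integers with gcd(B, C) = 1. Let (x, y, z) ∈ K³ be a nontrivial solution of A x^p + B y^p + C z^p = 0 (xyz ≠ 0), and suppose Y := (−BC)^{(p−1)/2}(B y^p − C z^p)/(2 x^p) equals 0. Then A = ±2, BC = ±1, y = ±z, and x = ±z. -/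
lemma aux_not_rat_sq {d : ℤ} (hd : Squarefree d) (hd1 : d ≠ 1) (r : ℚ) :
    r ^ 2 ≠ (d : ℚ) := by
  intro h
  have hden : ((r.den : ℚ)) ≠ 0 := by exact_mod_cast r.den_nz
  have hnum : (r.num : ℚ) ^ 2 = (d : ℚ) * (r.den : ℚ) ^ 2 := by
    rw [← Rat.num_div_den r] at h
    field_simp at h
    linarith [h]
  have hZ : r.num ^ 2 = d * (r.den : ℤ) ^ 2 := by exact_mod_cast hnum
  have hco : IsCoprime r.num ((r.den : ℤ)) := by
    rw [Int.isCoprime_iff_gcd_eq_one]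
    exact_mod_cast r.reduced
  have hdvd : ((r.den : ℤ)) ^ 2 ∣ r.num ^ 2 := ⟨d, by linarith [hZ]⟩
  have hu : IsUnit ((r.den : ℤ) ^ 2) :=
    (hco.symm.pow (n := 2) (m := 2)).isUnit_of_dvd hdvd
  have hden1 : (r.den : ℤ) = 1 := by
    rcases Int.isUnit_iff.mp hu with h1 | h1
    · nlinarith [Int.natCast_pos.mpr r.pos]
    · nlinarith [Int.natCast_pos.mpr r.pos]
  have hnum2 : r.num ^ 2 = d := by rw [hden1] at hZ; linarith [hZ]
  have hunum : IsUnit r.num := hd r.num ⟨1, by rw [← hnum2]; ring⟩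
  rcases Int.isUnit_iff.mp hunum with h1 | h1 <;>
    · rw [h1] at hnum2; simp at hnum2; omega

lemma aux_unit_of_pow_dvd {p : ℕ} (hp : p.Prime) {n E : ℤ} (hE : E ≠ 0)
    (hpf : ∀ q : ℤ, Prime q → ¬ q ^ p ∣ E) (hdvd : n ^ p ∣ E) : n = 1 ∨ n = -1 := by
  refine Int.isUnit_iff.mp ?_
  by_contra h
  have hn0 : n ≠ 0 := by
    rintro rfl
    rw [zero_pow hp.ne_zero] at hdvd
    exact hE (zero_dvd_iff.mp hdvd)
  obtain ⟨q, hq, hqn⟩ := Int.exists_prime_and_dvd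
    (fun habs => h (Int.isUnit_iff_natAbs_eq.mpr habs))
  exact hpf q hq (dvd_trans (pow_dvd_pow_of_dvd hqn p) hdvd)

lemma aux_exists_conj {d : ℤ} (hd : Squarefree d) (hd1 : d ≠ 1)
    (K : Type*) [Field K] [CharZero K] (s : K) (hs : s ^ 2 = (d : K))
    (hgen : ∀ w : K, ∃ a b : ℚ, w = (a : K) + (b : K) * s) :
    ∃ σ : K →+* K, ∀ w : K, σ w = w → ∃ r : ℚ, w = (r : K) := by
  have hd0 : d ≠ 0 := hd.ne_zero
  have hs0 : s ≠ 0 := by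
    intro h
    rw [h] at hs
    exact hd0 (by exact_mod_cast hs.symm)
  have uniq0 : ∀ a b : ℚ, (a : K) + (b : K) * s = 0 → a = 0 ∧ b = 0 := by
    intro a b hab
    by_cases hb : b = 0
    · refine ⟨?_, hb⟩
      rw [hb] at hab
      simpa using hab
    · exfalso
      have hbK : (b : K) ≠ 0 := by exact_mod_cast hb
      have hsr : s = ((-a / b : ℚ) : K) := by
        push_cast
        field_simp
        linear_combination hab
      apply aux_not_rat_sq hd hd1 (-a / b)
      have hcast : ((-a / b : ℚ) : K) ^ 2 = ((d : ℚ) : K) := by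
        rw [← hsr, hs]; push_cast; ring
      exact_mod_cast hcast
  have uniq : ∀ a b a' b' : ℚ, (a : K) + (b : K) * s = (a' : K) + (b' : K) * s →
      a = a' ∧ b = b' := by
    intro a b a' b' h
    have h0 : ((a - a' : ℚ) : K) + ((b - b' : ℚ) : K) * s = 0 := by
      push_cast; linear_combination h
    obtain ⟨h1, h2⟩ := uniq0 _ _ h0
    constructor <;> [linarith [sub_eq_zero.mp (by exact_mod_cast h1 : a - a' = 0)];
      linarith [sub_eq_zero.mp (by exact_mod_cast h2 : b - b' = 0)]]
  choose re im hre using hgen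
  have hre1 : re 1 = 1 ∧ im 1 = 0 := by
    have := (hre 1).symm.trans (show (1 : K) = ((1:ℚ):K) + ((0:ℚ):K) * s by push_cast; ring)
    exact uniq _ _ _ _ this
  have hadd : ∀ u v : K, re (u + v) = re u + re v ∧ im (u + v) = im u + im v := by
    intro u v
    apply uniq
    rw [← hre (u+v)]
    push_cast
    linear_combination hre u + hre v
  have hmul : ∀ u v : K, re (u * v) = re u * re v + d * (im u * im v)
      ∧ im (u * v) = re u * im v + im u * re v := by
    intro u v
    apply uniq
    rw [← hre (u*v)]
    push_cast
    linear_combination v * hre u + ((re u : K) + (im u : K) * s) * hre v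
      + (im u : K) * (im v : K) * hs
  refine ⟨{ toFun := fun w => (re w : K) - (im w : K) * s,
            map_one' := by
              show (re 1 : K) - (im 1 : K) * s = 1
              rw [hre1.1, hre1.2]; push_cast; ring,
            map_mul' := by
              intro u v
              show (re (u*v) : K) - (im (u*v) : K) * s
                = ((re u : K) - (im u : K) * s) * ((re v : K) - (im v : K) * s)
              rw [(hmul u v).1, (hmul u v).2]
              push_cast
              linear_combination (-(im u : K) * (im v : K)) * hs,
            map_zero' := by
              have h0 := uniq 0 0 (re 0) (im 0) (by rw [← hre 0]; push_cast; ring)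
              show (re 0 : K) - (im 0 : K) * s = 0
              rw [← h0.1, ← h0.2]; push_cast; ring,
            map_add' := by
              intro u v
              show (re (u+v) : K) - (im (u+v) : K) * s
                = ((re u : K) - (im u : K) * s) + ((re v : K) - (im v : K) * s)
              rw [(hadd u v).1, (hadd u v).2]
              push_cast
              ring }, ?_⟩
  intro w hw
  simp only [RingHom.coe_mk, MonoidHom.coe_mk, OneHom.coe_mk] at hw
  have hw2 : (re w : K) - (im w : K) * s = (re w : K) + (im w : K) * s := by
    rw [hw]; exact hre w
  have him : (im w : K) * s = 0 := by linear_combination (-1/2 : K) * hw2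
  refine ⟨re w, ?_⟩
  rcases mul_eq_zero.mp him with h | h
  · conv_lhs => rw [hre w]
    rw [h]; ring
  · exact absurd h hs0

lemma aux_rat_of_pow {d : ℤ} (hd : Squarefree d) (hd1 : d ≠ 1)
    (K : Type*) [Field K] [CharZero K] (s : K) (hs : s ^ 2 = (d : K))
    (hgen : ∀ w : K, ∃ a b : ℚ, w = (a : K) + (b : K) * s)
    {p : ℕ} (hp : p.Prime) (hp3 : 3 < p)
    {t : K} (ht : t ≠ 0) {r : ℚ} (htp : t ^ p = (r : K)) :
    ∃ q : ℚ, t = (q : K) := by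
  obtain ⟨σ, hσ⟩ := aux_exists_conj hd hd1 K s hs hgen
  have h1 : (σ t) ^ p = t ^ p := by rw [← map_pow, htp, map_ratCast]
  have htp0 : t ^ p ≠ 0 := pow_ne_zero _ ht
  set u := σ t / t with hu_def
  have hu : u ^ p = 1 := by
    rw [hu_def, div_pow, h1, div_self htp0]
  by_cases h : u = 1
  · apply hσ t
    rw [hu_def] at h
    exact (div_eq_one_iff_eq ht).mp h
  · exfalso
    classical
    have hspan : Submodule.span ℚ ((({1, s} : Finset K) : Set K)) = ⊤ := by
      rw [eq_top_iff]
      intro w _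
      obtain ⟨a, b, rfl⟩ := hgen w
      have h1m : (1 : K) ∈ Submodule.span ℚ ((({1, s} : Finset K) : Set K)) :=
        Submodule.subset_span (by simp)
      have hsm : s ∈ Submodule.span ℚ ((({1, s} : Finset K) : Set K)) :=
        Submodule.subset_span (by simp)
      have heqn : (a : K) + (b : K) * s = a • (1 : K) + b • s := by
        simp [Algebra.smul_def, Rat.smul_def]
      rw [heqn]
      exact Submodule.add_mem _ (Submodule.smul_mem _ a h1m) (Submodule.smul_mem _ b hsm)
    have hfin : Module.Finite ℚ K := by
      rw [Module.finite_def]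
      exact ⟨{1, s}, hspan⟩
    have hle : Module.finrank ℚ K ≤ 2 := by
      have h1 := finrank_span_finset_le_card (R := ℚ) ({1, s} : Finset K)
      rw [Set.finrank, hspan, finrank_top] at h1
      exact h1.trans ((Finset.card_insert_le _ _).trans (by simp))
    have hord : orderOf u = p := by
      have hdvd := orderOf_dvd_of_pow_eq_one hu
      rcases (Nat.Prime.eq_one_or_self_of_dvd hp _ hdvd) with h1' | h1'
      · exact absurd (orderOf_eq_one_iff.mp h1') h
      · exact h1'
    have hprim : IsPrimitiveRoot u p := hord ▸ IsPrimitiveRoot.orderOf u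
    have hmin := Polynomial.cyclotomic_eq_minpoly_rat hprim hp.pos
    have hdeg : (minpoly ℚ u).natDegree = p - 1 := by
      rw [← hmin, Polynomial.natDegree_cyclotomic, Nat.totient_prime hp]
    have hle2 : (minpoly ℚ u).natDegree ≤ 2 := le_trans (minpoly.natDegree_le u) hle
    omega

lemma aux_rat_pow_eq {p : ℕ} {E F : ℤ} (r : ℚ) (h : (E : ℚ) * r ^ p = F) :
    E * r.num ^ p = F * (r.den : ℤ) ^ p := by
  have hd0 : ((r.den : ℚ)) ≠ 0 := by exact_mod_cast r.den_nz
  rw [← Rat.num_div_den r, div_pow] at h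
  have h2 : (E : ℚ) * (r.num : ℚ) ^ p = (F : ℚ) * (r.den : ℚ) ^ p := by
    field_simp at h
    linear_combination h
  exact_mod_cast h2

lemma aux_coprime_num_den (r : ℚ) : IsCoprime r.num ((r.den : ℤ)) := by
  rw [Int.isCoprime_iff_gcd_eq_one]
  simpa [Int.gcd] using r.reduced

/-- Let `d` be a squarefree integer with `d ≠ 0, 1`, `K = ℚ(√d)`, `p > 3` a prime, and
`A, B, C` nonzero `p`th-powerfree integers with `gcd(B, C) = 1`.  Let `(x, y, z) ∈ K³` be
a nontrivial solution of `A x^p + B y^p + C z^p = 0` (`xyz ≠ 0`), and suppose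
`Y := (−BC)^((p−1)/2)(B y^p − C z^p)/(2 x^p)` equals `0`.  Then `A = ±2`, `BC = ±1`,
`y = ±z`, and `x = ±z`.  Here `K` is realized as a field of characteristic zero generated
over `ℚ` by a square root `s` of `d`. -/
theorem stmt_18 (d : ℤ) (hd : Squarefree d) (hd0 : d ≠ 0) (hd1 : d ≠ 1)
    (K : Type*) [Field K] [CharZero K] (s : K) (hs : s ^ 2 = (d : K))
    (hgen : ∀ w : K, ∃ a b : ℚ, w = (a : K) + (b : K) * s)
    (p : ℕ) (hp : p.Prime) (hp3 : 3 < p)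
    (A B C : ℤ) (hA : A ≠ 0) (hB : B ≠ 0) (hC : C ≠ 0)
    (hApf : ∀ q : ℤ, Prime q → ¬ q ^ p ∣ A)
    (hBpf : ∀ q : ℤ, Prime q → ¬ q ^ p ∣ B)
    (hCpf : ∀ q : ℤ, Prime q → ¬ q ^ p ∣ C)
    (hBCcop : IsCoprime B C)
    (x y z : K) (heq : (A : K) * x ^ p + (B : K) * y ^ p + (C : K) * z ^ p = 0)
    (hxyz : x * y * z ≠ 0)
    (hY : (((-(B * C)) ^ ((p - 1) / 2) : ℤ) : K) * ((B : K) * y ^ p - (C : K) * z ^ p)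
        / (2 * x ^ p) = 0) :
    (A = 2 ∨ A = -2) ∧ (B * C = 1 ∨ B * C = -1)
      ∧ (y = z ∨ y = -z) ∧ (x = z ∨ x = -z) := by
  have hodd : Odd p := hp.odd_of_ne_two (by omega)
  have hx : x ≠ 0 := left_ne_zero_of_mul (left_ne_zero_of_mul hxyz)
  have hy : y ≠ 0 := right_ne_zero_of_mul (left_ne_zero_of_mul hxyz)
  have hz : z ≠ 0 := right_ne_zero_of_mul hxyz
  have hBK : (B : K) ≠ 0 := Int.cast_ne_zero.mpr hB
  have hAK : (A : K) ≠ 0 := Int.cast_ne_zero.mpr hA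
  -- Step 1: numerator of Y vanishes
  have hnum : (B : K) * y ^ p - (C : K) * z ^ p = 0 := by
    have h2x : (2 : K) * x ^ p ≠ 0 := mul_ne_zero two_ne_zero (pow_ne_zero _ hx)
    have hcne : ((((-(B * C)) ^ ((p - 1) / 2) : ℤ) : K)) ≠ 0 := by
      rw [Int.cast_ne_zero]
      exact pow_ne_zero _ (by simp [hB, hC])
    rcases div_eq_zero_iff.mp hY with h | h
    · rcases mul_eq_zero.mp h with h' | h'
      · exact absurd h' hcne
      · exact h'
    · exact absurd h h2x
  -- Step 2: y = ± z and B C = ± 1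
  have htp1 : (y / z) ^ p = (((C / B : ℚ)) : K) := by
    push_cast
    rw [div_pow, div_eq_div_iff (pow_ne_zero _ hz) hBK]
    linear_combination hnum
  obtain ⟨r, hr⟩ := aux_rat_of_pow hd hd1 K s hs hgen hp hp3 (div_ne_zero hy hz) htp1
  have hrQ : (B : ℚ) * r ^ p = C := by
    have h2 : (r : ℚ) ^ p = (C : ℚ) / B := by
      have : ((r : ℚ) : K) ^ p = ((C / B : ℚ) : K) := by rw [← hr]; exact htp1
      exact_mod_cast this
    rw [h2, mul_div_cancel₀]
    exact Int.cast_ne_zero.mpr hB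
  have hmn : B * r.num ^ p = C * (r.den : ℤ) ^ p := aux_rat_pow_eq r hrQ
  have hco := aux_coprime_num_den r
  have hn1 : ((r.den : ℤ)) = 1 := by
    have hdvd : ((r.den : ℤ)) ^ p ∣ B :=
      (hco.symm.pow).dvd_of_dvd_mul_right ⟨C, by rw [hmn]; ring⟩
    have := aux_unit_of_pow_dvd hp hB hBpf hdvd
    have hpos : (0 : ℤ) < (r.den : ℤ) := Int.natCast_pos.mpr r.pos
    omega
  have hm1 : r.num = 1 ∨ r.num = -1 := by
    have hdvd : r.num ^ p ∣ C :=
      (hco.pow).dvd_of_dvd_mul_right ⟨B, by rw [← hmn]; ring⟩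
    exact aux_unit_of_pow_dvd hp hC hCpf hdvd
  have hrval : r = (r.num : ℚ) := by
    conv_lhs => rw [← Rat.num_div_den r]
    rw [show ((r.den : ℚ)) = 1 by exact_mod_cast hn1, div_one]
  -- relation between B and C, and between y and z
  have hBC2 : (r.num = 1 ∧ C = B ∧ y = z) ∨ (r.num = -1 ∧ C = -B ∧ y = -z) := by
    rcases hm1 with h1 | h1
    · left
      refine ⟨h1, ?_, ?_⟩
      · rw [hn1, h1] at hmn
        simp at hmn
        omega
      · have : y / z = (1 : K) := by
          rw [hr, hrval, h1]; push_cast; ring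
        field_simp at this
        exact this
    · right
      refine ⟨h1, ?_, ?_⟩
      · rw [hn1, h1, hodd.neg_one_pow] at hmn
        simp at hmn
        omega
      · have : y / z = (-1 : K) := by
          rw [hr, hrval, h1]; push_cast; ring
        rw [div_eq_iff hz] at this
        rw [this]; ring
  have hBunit : B = 1 ∨ B = -1 := by
    have hBdvdC : B ∣ C := by
      rcases hBC2 with ⟨_, h, _⟩ | ⟨_, h, _⟩
      · exact ⟨1, by omega⟩
      · exact ⟨-1, by omega⟩
    exact Int.isUnit_iff.mp (hBCcop.isUnit_of_dvd' dvd_rfl hBdvdC)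
  have hCunit : C = 1 ∨ C = -1 := by rcases hBC2 with ⟨_, h, _⟩ | ⟨_, h, _⟩ <;> omega
  have hBCval : B * C = 1 ∨ B * C = -1 := by
    rcases hBC2 with ⟨_, h, _⟩ | ⟨_, h, _⟩ <;> rcases hBunit with h' | h' <;>
      rw [h, h'] <;> norm_num
  have hyz : y = z ∨ y = -z := by
    rcases hBC2 with ⟨_, _, h⟩ | ⟨_, _, h⟩
    · exact Or.inl h
    · exact Or.inr h
  -- Step 3: x = ± z and A = ± 2
  have htp2 : (x / z) ^ p = (((-2 * C / A : ℚ)) : K) := by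
    push_cast
    rw [div_pow, div_eq_div_iff (pow_ne_zero _ hz) hAK]
    linear_combination heq - hnum
  obtain ⟨r2, hr2⟩ := aux_rat_of_pow hd hd1 K s hs hgen hp hp3 (div_ne_zero hx hz) htp2
  have hrQ2 : (A : ℚ) * r2 ^ p = ((-2 * C : ℤ) : ℚ) := by
    have h2 : (r2 : ℚ) ^ p = (-2 * C : ℚ) / A := by
      have : ((r2 : ℚ) : K) ^ p = ((-2 * C / A : ℚ) : K) := by rw [← hr2]; exact htp2
      exact_mod_cast this
    rw [h2]
    push_cast
    rw [mul_div_cancel₀]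
    exact Int.cast_ne_zero.mpr hA
  have hmn2 : A * r2.num ^ p = (-2 * C) * (r2.den : ℤ) ^ p := aux_rat_pow_eq r2 hrQ2
  have hco2 := aux_coprime_num_den r2
  have hn21 : ((r2.den : ℤ)) = 1 := by
    have hdvd : ((r2.den : ℤ)) ^ p ∣ A :=
      (hco2.symm.pow).dvd_of_dvd_mul_right ⟨-2 * C, by rw [hmn2]; ring⟩
    have := aux_unit_of_pow_dvd hp hA hApf hdvd
    have hpos : (0 : ℤ) < (r2.den : ℤ) := Int.natCast_pos.mpr r2.pos
    omega
  have hkey : A * r2.num ^ p = -2 * C := by rw [hn21] at hmn2; simpa using hmn2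
  have hm2 : r2.num = 1 ∨ r2.num = -1 := by
    have hdvd : r2.num ^ p ∣ -2 * C := ⟨A, by rw [← hkey]; ring⟩
    have hdvdN : r2.num.natAbs ^ p ∣ (-2 * C).natAbs := by
      rw [← Int.natAbs_pow]
      exact Int.natAbs_dvd_natAbs.mpr hdvd
    have hCN : (-2 * C).natAbs = 2 := by rcases hCunit with h | h <;> rw [h] <;> rfl
    rw [hCN] at hdvdN
    have hle := Nat.le_of_dvd (by norm_num) hdvdN
    have hna : r2.num.natAbs = 1 := by
      by_contra hcon
      rcases Nat.lt_or_ge r2.num.natAbs 2 with h' | h'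
      · interval_cases h'' : r2.num.natAbs
        · simp [zero_pow hp.ne_zero] at hdvdN
        · exact hcon rfl
      · have h1 : 2 ^ p ≤ r2.num.natAbs ^ p := Nat.pow_le_pow_left h' p
        have h2 : 2 ^ 4 ≤ 2 ^ p := Nat.pow_le_pow_right (by norm_num) (by omega)
        omega
    rcases Int.natAbs_eq r2.num with h | h <;> rw [h, hna] <;> simp
  have hr2val : r2 = (r2.num : ℚ) := by
    conv_lhs => rw [← Rat.num_div_den r2]
    rw [show ((r2.den : ℚ)) = 1 by exact_mod_cast hn21, div_one]
  have hxz : x = z ∨ x = -z := by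
    rcases hm2 with h | h
    · left
      have : x / z = (1 : K) := by rw [hr2, hr2val, h]; push_cast; ring
      field_simp at this
      exact this
    · right
      have : x / z = (-1 : K) := by rw [hr2, hr2val, h]; push_cast; ring
      rw [div_eq_iff hz] at this
      rw [this]; ring
  have hAval : A = 2 ∨ A = -2 := by
    rcases hm2 with h | h <;> rw [h] at hkey
    · rw [one_pow] at hkey
      rcases hCunit with h' | h' <;> rw [h'] at hkey <;> omega
    · rw [hodd.neg_one_pow] at hkey
      rcases hCunit with h' | h' <;> rw [h'] at hkey <;> omega
  exact ⟨hAval, hBCval, hyz, hxz⟩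
end
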